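/- arXiv:1705.09224 — 5 statements merged into one kernel-verified Lean document; each statement's English description precedes it below -/
import Mathlib

section
/- Let R be a complete noetherian local ring (a noetherian local ring complete in the topology defined by its maximal ideal) whose residue field has cardinality α, and let M be an R-module with Krull dimension of R/Ann_R(M) at most 1. Suppose that for some non-maximal prime ideal P of R, the module (R/P)^2 is isomorphic to a subquotient of M. Then M has at least α^ℵ₀ submodules (hence at least 2^ℵ₀ if α is countable), with equality if M is finitely generated. -/
/-- `X` is (isomorphic to) a subquotient of the `R`-module `M`. -/
def IsSubquotientOf (R : Type u) [CommRing R]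
    (X : Type x) [AddCommGroup X] [Module R X]
    (M : Type v) [AddCommGroup M] [Module R M] : Prop :=
  ∃ (N : Submodule R M) (P : Submodule R (M ⧸ N)), Nonempty (X ≃ₗ[R] P)

/-!
Choose `aₙ ∈ 𝔪ⁿ` outside `P + 𝔪ⁿ⁺¹` (Nakayama, as `𝔪 ⊄ P`) and representatives `s` of the residue
field `k`. By completeness every `c : ℕ → k` gives a series `∑ s(cₙ) aₙ`, and two such series
with different `c` differ modulo `P + 𝔪ᴺ⁺¹` at the first index `N` where they disagree, so
`|R ⧸ P| ≥ |k| ^ ℵ₀`. The cyclic submodules generated by the `(1, d)` in `(R ⧸ P)²` are pairwise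
distinct, and submodules of a subquotient of `M` pull back injectively to `M`.

Conversely the subring generated by `s(k)` and generators of `𝔪` is `𝔪`-adically dense and has at
most `|k| + ℵ₀` elements, so `|R| ≤ |k| ^ ℵ₀`; over the noetherian ring `R`, a finitely generated
module has at most `|R| + ℵ₀` elements and every submodule is spanned by a finite list of them.
-/

open Cardinal IsLocalRing Finset

namespace Cardinal

variable {κ : Cardinal.{u}}

theorem continuum_le_power_aleph0 (hκ : 2 ≤ κ) : 𝔠 ≤ κ ^ ℵ₀ :=
  two_power_aleph0 ▸ power_le_power_right hκ

theorem aleph0_le_power_aleph0 (hκ : 2 ≤ κ) : ℵ₀ ≤ κ ^ ℵ₀ :=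
  aleph0_le_continuum.trans (continuum_le_power_aleph0 hκ)

theorem power_aleph0_le_power_aleph0 {μ : Cardinal.{u}} (h : μ ≤ κ ^ ℵ₀) :
    μ ^ ℵ₀ ≤ κ ^ ℵ₀ :=
  (power_le_power_right h).trans (by rw [← power_mul, aleph0_mul_aleph0])

end Cardinal

theorem exists_sub_mem_span_pow_of_subring {A : Type*} [CommRing A] {ι : Type*} [Fintype ι]
    (x : ι → A) (S : Subring A) (hxS : ∀ i, x i ∈ S)
    (hS : ∀ a, ∃ s ∈ S, a - s ∈ Ideal.span (Set.range x)) (n : ℕ) (a : A) :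
    ∃ s ∈ S, a - s ∈ Ideal.span (Set.range x) ^ n := by
  induction n generalizing a with
  | zero => exact ⟨0, S.zero_mem, by simp⟩
  | succ n ih =>
    obtain ⟨s₀, hs₀, hrest⟩ := hS a
    obtain ⟨c, hc⟩ := Ideal.mem_span_range_iff_exists_fun.1 hrest
    choose t htS ht using fun i => ih (c i)
    refine ⟨s₀ + ∑ i, t i * x i, S.add_mem hs₀ (S.sum_mem fun i _ => S.mul_mem (htS i) (hxS i)), ?_⟩
    have : a - (s₀ + ∑ i, t i * x i) = ∑ i, (c i - t i) * x i := by
      simp only [sub_mul, Finset.sum_sub_distrib, hc]; ring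
    rw [this, pow_succ]
    exact Ideal.sum_mem _ fun i _ => Ideal.mul_mem_mul (ht i) (Ideal.subset_span ⟨i, rfl⟩)

theorem IsHausdorff.mk_le_mk_power_aleph0 {A : Type*} [CommRing A] {I : Ideal A}
    {M : Type u} [AddCommGroup M] [Module A M] [IsHausdorff I M] (S : Set M)
    (hS : ∀ (n : ℕ) (x : M), ∃ s ∈ S, x - s ∈ I ^ n • (⊤ : Submodule A M)) :
    #M ≤ #S ^ ℵ₀ := by
  choose s hsS hs using hS
  have hinj : Function.Injective fun (x : M) (n : ℕ) => (⟨s n x, hsS n x⟩ : S) := by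
    intro x y hxy
    refine (IsHausdorff.eq_iff_smodEq (I := I)).2 fun n => ?_
    have hn : s n x = s n y := congrArg Subtype.val (congrFun hxy n)
    rw [SModEq.sub_mem]
    simpa [hn] using sub_mem (hs n x) (hs n y)
  simpa using mk_le_of_injective hinj


theorem IsLocalRing.mk_le_residueField_power_aleph0 {R : Type u} [CommRing R]
    [IsNoetherianRing R] [IsLocalRing R] [IsHausdorff (maximalIdeal R) R] :
    #R ≤ #(ResidueField R) ^ ℵ₀ := by
  obtain ⟨r, x, hx⟩ : ∃ (r : ℕ) (x : Fin r → R), Ideal.span (Set.range x) = maximalIdeal R :=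
    Submodule.fg_iff_exists_fin_generating_family.1 (IsNoetherian.noetherian _)
  set s := Function.surjInv (residue_surjective (R := R))
  let g : ResidueField R ⊕ Fin r → R := Sum.elim s x
  let S := (MvPolynomial.aeval (R := ℤ) g).range.toSubring
  have hk : 2 ≤ #(ResidueField R) := two_le_iff.2 ⟨0, 1, zero_ne_one⟩
  have hgS : ∀ i, g i ∈ S := fun i => ⟨MvPolynomial.X i, MvPolynomial.aeval_X _ _⟩
  have hdense : ∀ n a, ∃ t ∈ S, a - t ∈ maximalIdeal R ^ n • (⊤ : Submodule R R) := by
    intro n a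
    rw [smul_eq_mul, Ideal.mul_top, ← hx]
    refine exists_sub_mem_span_pow_of_subring x S (fun i => hgS (.inr i)) (fun b => ?_) n a
    refine ⟨s (residue R b), hgS (.inl _), ?_⟩
    rw [hx, ← Ideal.Quotient.eq]
    exact (Function.surjInv_eq _ _).symm
  have hS : #S ≤ #(ResidueField R) ^ ℵ₀ := by
    calc #S ≤ #(MvPolynomial (ResidueField R ⊕ Fin r) ℤ) :=
          mk_le_of_surjective (MvPolynomial.aeval g).rangeRestrict_surjective
      _ ≤ lift.{u} #ℤ ⊔ lift.{0} #(ResidueField R ⊕ Fin r) ⊔ ℵ₀ :=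
          MvPolynomial.cardinalMk_le_max_lift
      _ ≤ #(ResidueField R) ^ ℵ₀ := by
        have h₀ := aleph0_le_power_aleph0 hk
        simp only [mk_int, lift_aleph0, lift_uzero, mk_sum, mk_fin, lift_natCast, sup_le_iff]
        exact ⟨⟨h₀, add_le_of_le h₀ (self_le_power _ one_le_aleph0)
          (natCast_lt_aleph0.le.trans h₀)⟩, h₀⟩
  exact (IsHausdorff.mk_le_mk_power_aleph0 (I := maximalIdeal R) (S : Set R) hdense).trans
    (power_aleph0_le_power_aleph0 hS)

theorem Submodule.mk_le_max_aleph0 (R : Type*) {M : Type u} [Semiring R] [AddCommMonoid M]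
    [Module R M] [IsNoetherian R M] : #(Submodule R M) ≤ max ℵ₀ #M := by
  have hsurj : Function.Surjective fun l : List M => Submodule.span R {x | x ∈ l} := by
    intro N
    obtain ⟨T, hT⟩ := IsNoetherian.noetherian N
    exact ⟨T.toList, by simpa using hT⟩
  exact (mk_le_of_surjective hsurj).trans (mk_list_le_max M)

theorem Module.Finite.lift_mk_le_max_aleph0 (R : Type u) (M : Type v) [Semiring R]
    [AddCommMonoid M] [Module R M] [Module.Finite R M] :
    lift.{u} #M ≤ lift.{v} (max ℵ₀ #R) := by
  obtain ⟨t, f, hf⟩ := Module.Finite.exists_fin' R M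
  calc lift.{u} #M ≤ lift.{v} #(Fin t → R) := lift_mk_le_lift_mk_of_surjective hf
    _ ≤ lift.{v} #(List R) := lift_le.2 (mk_le_of_injective List.ofFn_injective)
    _ ≤ lift.{v} (max ℵ₀ #R) := lift_le.2 (mk_list_le_max R)

theorem Module.Finite.lift_mk_submodule_le (R : Type u) (M : Type v) [CommRing R]
    [IsNoetherianRing R] [AddCommGroup M] [Module R M] [Module.Finite R M] :
    lift.{u} #(Submodule R M) ≤ lift.{v} (max ℵ₀ #R) := by
  calc lift.{u} #(Submodule R M) ≤ max ℵ₀ (lift.{u} #M) := by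
        simpa using lift_le.{u}.2 (Submodule.mk_le_max_aleph0 R (M := M))
    _ ≤ lift.{v} (max ℵ₀ #R) := max_le (by simp) (lift_mk_le_max_aleph0 R M)

theorem Ideal.not_pow_le_sup_pow_succ {R : Type*} [CommRing R] [IsNoetherianRing R]
    {I P : Ideal R} [P.IsPrime] (hI : I ≤ jacobson ⊥) (hIP : ¬ I ≤ P) (n : ℕ) :
    ¬ I ^ n ≤ P ⊔ I ^ (n + 1) := by
  intro h
  rw [pow_succ', ← smul_eq_mul] at h
  exact hIP (Ideal.IsPrime.le_of_pow_le
    (Submodule.le_of_le_smul_of_le_jacobson_bot (IsNoetherian.noetherian _) hI h))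

theorem IsPrecomplete.exists_sub_sum_range_mem {R : Type*} [CommRing R] {I : Ideal R}
    [IsPrecomplete I R] (x : ℕ → R) (hx : ∀ n, x n ∈ I ^ n) :
    ∃ L, ∀ n, L - ∑ i ∈ range n, x i ∈ I ^ n := by
  have hcauchy : ∀ {m n : ℕ}, m ≤ n →
      ∑ i ∈ range m, x i ≡ ∑ i ∈ range n, x i [SMOD (I ^ m • ⊤ : Submodule R R)] := by
    intro m n hmn
    rw [SModEq.sub_mem, smul_eq_mul, Ideal.mul_top, ← neg_sub, neg_mem_iff,
      ← sum_Ico_eq_sub _ hmn]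
    exact Ideal.sum_mem _ fun i hi => Ideal.pow_le_pow_right (mem_Ico.1 hi).1 (hx i)
  obtain ⟨L, hL⟩ := IsPrecomplete.prec ‹_› hcauchy
  refine ⟨L, fun n => ?_⟩
  have := (hL n).symm
  rwa [SModEq.sub_mem, smul_eq_mul, Ideal.mul_top] at this

theorem eq_of_sub_sum_mem_of_not_mem_sup {R : Type*} [CommRing R] {I J : Ideal R} {a : ℕ → R}
    (ha : ∀ n, a n ∉ J ⊔ I ^ (n + 1)) {b b' : ℕ → R}
    (hb : ∀ n, b n ≠ b' n → IsUnit (b n - b' n)) {L L' : R}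
    (hL : ∀ n, L - ∑ i ∈ range n, b i * a i ∈ I ^ n)
    (hL' : ∀ n, L' - ∑ i ∈ range n, b' i * a i ∈ I ^ n) (hJ : L - L' ∈ J) : b = b' := by
  classical
  by_contra hne
  have hex : ∃ n, b n ≠ b' n := Function.ne_iff.1 hne
  set N := Nat.find hex
  have hagree : ∀ i ∈ range N, b i * a i = b' i * a i := fun i hi =>
    by rw [not_not.1 (Nat.find_min hex (mem_range.1 hi))]
  have hdiff : (L - L') - (b N - b' N) * a N ∈ I ^ (N + 1) := by
    have : (L - L') - (b N - b' N) * a N = (L - ∑ i ∈ range (N + 1), b i * a i) -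
        (L' - ∑ i ∈ range (N + 1), b' i * a i) := by
      simp only [sum_range_succ, sum_congr rfl hagree]; ring
    rw [this]
    exact sub_mem (hL _) (hL' _)
  have hmem : (b N - b' N) * a N ∈ J ⊔ I ^ (N + 1) := by
    rw [← sub_sub_cancel (L - L') ((b N - b' N) * a N)]
    exact sub_mem (Ideal.mem_sup_left hJ) (Ideal.mem_sup_right hdiff)
  exact ha N ((Ideal.unit_mul_mem_iff_mem _ (hb N (Nat.find_spec hex))).1 hmem)

theorem IsLocalRing.power_aleph0_le_mk_quotient {R : Type u} [CommRing R] [IsNoetherianRing R]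
    [IsLocalRing R] [IsPrecomplete (maximalIdeal R) R] {P : Ideal R} [P.IsPrime]
    (hP : ¬ P.IsMaximal) : #(ResidueField R) ^ ℵ₀ ≤ #(R ⧸ P) := by
  have hmP : ¬ maximalIdeal R ≤ P := fun h =>
    hP ((le_maximalIdeal (Ideal.IsPrime.ne_top ‹_›)).antisymm h ▸ maximalIdeal.isMaximal R)
  choose a ha using fun n => SetLike.not_le_iff_exists.1
    (Ideal.not_pow_le_sup_pow_succ (maximalIdeal_le_jacobson ⊥) hmP n)
  set s := Function.surjInv (residue_surjective (R := R))
  have hs : ∀ c, residue R (s c) = c := Function.surjInv_eq _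
  choose L hL using fun c : ℕ → ResidueField R =>
    IsPrecomplete.exists_sub_sum_range_mem (fun i => s (c i) * a i)
      fun i => Ideal.mul_mem_left _ _ (ha i).1
  have hinj : Function.Injective fun c => Ideal.Quotient.mk P (L c) := by
    intro c c' hcc
    have hb := eq_of_sub_sum_mem_of_not_mem_sup (fun n => (ha n).2) (b := s ∘ c) (b' := s ∘ c')
      (fun n hn => (residue_ne_zero_iff_isUnit _).1 <| by
        simp only [map_sub, Function.comp_apply, hs, sub_ne_zero]
        exact fun h => hn (by simp [h]))
      (hL c) (hL c') (Ideal.Quotient.eq.1 hcc)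
    exact (Function.injective_surjInv _).comp_left hb
  simpa using mk_le_of_injective hinj

theorem Submodule.injective_span_singleton_one_prod (R : Type*) {A : Type*} [CommSemiring R]
    [Semiring A] [Algebra R A] :
    Function.Injective fun d : A => span R {((1 : A), d)} := by
  intro d d' (h : span R {((1 : A), d)} = span R {((1 : A), d')})
  obtain ⟨r, hr⟩ := mem_span_singleton.1 (h ▸ mem_span_singleton_self ((1 : A), d'))
  simp only [Prod.smul_mk, Prod.mk.injEq] at hr
  rw [← hr.2, ← one_mul d, ← smul_mul_assoc, hr.1]

theorem IsSubquotientOf.lift_mk_submodule_le {R : Type u} [CommRing R]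
    {X : Type x} [AddCommGroup X] [Module R X] {M : Type v} [AddCommGroup M] [Module R M]
    (h : IsSubquotientOf R X M) : lift.{v} #(Submodule R X) ≤ lift.{x} #(Submodule R M) := by
  obtain ⟨N, Q, ⟨e⟩⟩ := h
  refine lift_mk_le_lift_mk_of_injective (f := fun S =>
    (S.map e.toLinearMap |>.map Q.subtype).comap N.mkQ) fun S S' hS => ?_
  exact Submodule.map_injective_of_injective e.injective <|
    Submodule.map_injective_of_injective Q.injective_subtype <|
    Submodule.comap_injective_of_surjective N.mkQ_surjective hS

theorem card_submodules_ge_of_square_subquotient_general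
    (R : Type u) [CommRing R] [IsNoetherianRing R] [IsLocalRing R]
    [IsAdicComplete (IsLocalRing.maximalIdeal R) R]
    (M : Type v) [AddCommGroup M] [Module R M]
    (P : Ideal R) (hP : P.IsPrime) (hPmax : ¬ P.IsMaximal)
    (hsq : IsSubquotientOf R ((R ⧸ P) × (R ⧸ P)) M) :
    Cardinal.lift.{v} (Cardinal.mk (IsLocalRing.ResidueField R) ^ Cardinal.aleph0) ≤
        Cardinal.lift.{u} (Cardinal.mk (Submodule R M)) ∧
      (Countable (IsLocalRing.ResidueField R) →
        Cardinal.continuum ≤ Cardinal.mk (Submodule R M)) ∧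
      (Module.Finite R M →
        Cardinal.lift.{u} (Cardinal.mk (Submodule R M)) =
          Cardinal.lift.{v} (Cardinal.mk (IsLocalRing.ResidueField R) ^ Cardinal.aleph0)) := by
  have : P.IsPrime := hP
  have hk : 2 ≤ #(ResidueField R) := two_le_iff.2 ⟨0, 1, zero_ne_one⟩
  have hlower : lift.{v} (#(ResidueField R) ^ ℵ₀) ≤ lift.{u} #(Submodule R M) :=
    calc lift.{v} (#(ResidueField R) ^ ℵ₀) ≤ lift.{v} #(R ⧸ P) :=
          lift_le.2 (power_aleph0_le_mk_quotient hPmax)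
      _ ≤ lift.{v} #(Submodule R ((R ⧸ P) × (R ⧸ P))) :=
          lift_le.2 (mk_le_of_injective (Submodule.injective_span_singleton_one_prod R))
      _ ≤ lift.{u} #(Submodule R M) := hsq.lift_mk_submodule_le
  refine ⟨hlower, fun _ => ?_, fun _ => le_antisymm ?_ hlower⟩
  · rw [← lift_le.{u}, lift_continuum]
    simpa using (lift_le.{v}.2 (continuum_le_power_aleph0 hk)).trans hlower
  · calc lift.{u} #(Submodule R M) ≤ lift.{v} (max ℵ₀ #R) :=
          Module.Finite.lift_mk_submodule_le R M
      _ ≤ lift.{v} (#(ResidueField R) ^ ℵ₀) :=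
          lift_le.2 (max_le (aleph0_le_power_aleph0 hk) mk_le_residueField_power_aleph0)

/-- Let `R` be a complete noetherian local ring whose residue field has cardinality `α`, and
`M` an `R`-module with `dim (R ⧸ Ann M) ≤ 1`.  If `(R/P)²` is a subquotient of `M` for some
non-maximal prime `P`, then `M` has at least `α ^ ℵ₀` submodules (hence at least `2^ℵ₀` if
`α` is countable), with equality if `M` is finitely generated. -/
theorem card_submodules_ge_of_square_subquotient
    (R : Type u) [CommRing R] [IsNoetherianRing R] [IsLocalRing R]
    [IsAdicComplete (IsLocalRing.maximalIdeal R) R]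
    (M : Type v) [AddCommGroup M] [Module R M]
    (hdim : ringKrullDim (R ⧸ Module.annihilator R M) ≤ 1)
    (P : Ideal R) (hP : P.IsPrime) (hPmax : ¬ P.IsMaximal)
    (hsq : IsSubquotientOf R ((R ⧸ P) × (R ⧸ P)) M) :
    Cardinal.lift.{v} (Cardinal.mk (IsLocalRing.ResidueField R) ^ Cardinal.aleph0) ≤
        Cardinal.lift.{u} (Cardinal.mk (Submodule R M)) ∧
      (Countable (IsLocalRing.ResidueField R) →
        Cardinal.continuum ≤ Cardinal.mk (Submodule R M)) ∧
      (Module.Finite R M →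
        Cardinal.lift.{u} (Cardinal.mk (Submodule R M)) =
          Cardinal.lift.{v} (Cardinal.mk (IsLocalRing.ResidueField R) ^ Cardinal.aleph0)) :=
  card_submodules_ge_of_square_subquotient_general R M P hP hPmax hsq
end

section
/- Let A be a noetherian unique factorization domain of Krull dimension 2. Then for every non-maximal prime ideal P of A, the A-module (A/P)^2 is not isomorphic to a subquotient of A, i.e. (A/P)^2 does not embed as an A-submodule into any quotient ring A/I. -/
/-!
Send the standard basis of `(A ⧸ P)²` to the classes of `a, b ∈ A` in `A ⧸ I`. Since
`b • a - a • b = 0`, injectivity forces `a, b ∈ P`. In a UFD of dimension two a non-maximal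
prime has height at most one, so `P = (p)`; writing `a = p a'`, `b = p b'`, the classes of
`a', b'` embed `(A ⧸ P)²` into `A ⧸ (I : p)` in the same way. Hence `pⁿ ∣ a` for every `n`,
which is impossible for the nonzero `a` and the non-unit `p`.
-/

open Ideal

section

variable {A : Type*} [CommRing A]

/-- `(r, s) ↦ r * a + s * b` induces an injective linear map `(A ⧸ P)² → A ⧸ I`. -/
def EmbedsSquare (P I : Ideal A) (a b : A) : Prop :=
  ∀ r s : A, r * a + s * b ∈ I ↔ r ∈ P ∧ s ∈ P

theorem exists_embedsSquare_of_injective {P I : Ideal A}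
    {f : (A ⧸ P) × (A ⧸ P) →ₗ[A] A ⧸ I} (hf : Function.Injective f) :
    ∃ a b : A, EmbedsSquare P I a b := by
  obtain ⟨a, ha⟩ := Ideal.Quotient.mk_surjective (f (1, 0))
  obtain ⟨b, hb⟩ := Ideal.Quotient.mk_surjective (f (0, 1))
  refine ⟨a, b, fun r s => ?_⟩
  have hf_mk : f (Ideal.Quotient.mk P r, Ideal.Quotient.mk P s) =
      Ideal.Quotient.mk I (r * a + s * b) := by
    have : (Ideal.Quotient.mk P r, Ideal.Quotient.mk P s) =
        r • ((1 : A ⧸ P), (0 : A ⧸ P)) + s • (0, 1) := by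
      ext <;> simp [Algebra.smul_def]
    rw [this, map_add, map_smul, map_smul, ← ha, ← hb, map_add]
    rfl
  rw [← Quotient.eq_zero_iff_mem, ← hf_mk, map_eq_zero_iff f hf, Prod.mk_eq_zero,
    Quotient.eq_zero_iff_mem, Quotient.eq_zero_iff_mem]

namespace EmbedsSquare

variable {P I : Ideal A} {a b : A}

theorem mem (h : EmbedsSquare P I a b) : a ∈ P ∧ b ∈ P := by
  obtain ⟨hb, ha⟩ := (h b (-a)).1 (by simp [mul_comm])
  exact ⟨by simpa using P.neg_mem ha, hb⟩

theorem colon {p : A} (h : EmbedsSquare P I (p * a) (p * b)) :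
    EmbedsSquare P (I.colon {p}) a b := by
  intro r s
  rw [Submodule.mem_colon_singleton, ← h, smul_eq_mul]
  ring_nf

theorem pow_dvd {p : A} (h : EmbedsSquare (span {p}) I a b) (n : ℕ) : p ^ n ∣ a := by
  induction n generalizing I a b with
  | zero => simp
  | succ n ih =>
    obtain ⟨⟨a', rfl⟩, ⟨b', rfl⟩⟩ := h.mem.imp mem_span_singleton.1 mem_span_singleton.1
    rw [pow_succ']
    exact mul_dvd_mul_left p (ih h.colon)

end EmbedsSquare

theorem not_embedsSquare_span_singleton [IsCancelMulZero A] [WfDvdMonoid A] {p : A}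
    (hp : ¬IsUnit p) (I : Ideal A) (a b : A) : ¬EmbedsSquare (span {p}) I a b := by
  intro h
  have ha : a ≠ 0 := by
    rintro rfl
    have := (h 1 0).1 (by simp)
    exact hp (isUnit_of_dvd_one (mem_span_singleton.1 this.1))
  exact FiniteMultiplicity.not_iff_forall.2 h.pow_dvd (FiniteMultiplicity.of_not_isUnit hp ha)

theorem UniqueFactorizationMonoid.isPrincipal_of_not_isMaximal [IsDomain A]
    [UniqueFactorizationMonoid A] (hdim : ringKrullDim A ≤ 2) {P : Ideal A} [P.IsPrime]
    (hP : ¬P.IsMaximal) : P.IsPrincipal := by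
  rcases eq_or_ne P ⊥ with rfl | hbot
  · exact bot_isPrincipal
  obtain ⟨m, hm, hPm⟩ := exists_le_maximal P IsPrime.ne_top'
  have hPm : P < m := lt_of_le_of_ne hPm fun h => hP (h ▸ hm)
  have hle : ((P.height + 1 : ℕ∞) : WithBot ℕ∞) ≤ 2 :=
    (WithBot.coe_le_coe.2 (height_add_one_le_of_lt_of_isPrime hPm)).trans
      (height_le_ringKrullDim_of_isPrime.trans hdim)
  refine isPrincipal_of_height_eq_one (le_antisymm ?_ ?_)
  · have : P.height + 1 ≤ 1 + 1 := WithBot.coe_le_coe.1 hle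
    exact (ENat.add_le_add_iff_right ENat.one_ne_top).1 this
  · exact le_of_add_le_right (height_add_one_le_of_lt_of_isPrime (bot_lt_iff_ne_bot.2 hbot))

end

theorem square_not_subquotient_of_ufd_dim_two_general
    (A : Type u) [CommRing A] [IsDomain A]
    [UniqueFactorizationMonoid A]
    (hdim : ringKrullDim A = 2)
    (P : Ideal A) (hP : P.IsPrime) (hPmax : ¬ P.IsMaximal) :
    ∀ I : Ideal A, ¬ ∃ f : ((A ⧸ P) × (A ⧸ P)) →ₗ[A] A ⧸ I, Function.Injective f := by
  rintro I ⟨f, hf⟩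
  obtain ⟨⟨p, rfl⟩⟩ := UniqueFactorizationMonoid.isPrincipal_of_not_isMaximal hdim.le hPmax
  obtain ⟨a, b, h⟩ := exists_embedsSquare_of_injective hf
  exact not_embedsSquare_span_singleton (fun hu => hP.ne_top (span_singleton_eq_top.2 hu)) I a b h

/-- Let `A` be a noetherian unique factorization domain of Krull dimension 2.  Then for
every non-maximal prime ideal `P` of `A`, the `A`-module `(A/P)²` is not isomorphic to a
subquotient of `A`, i.e. `(A/P)²` does not embed `A`-linearly into any quotient `A ⧸ I`. -/
theorem square_not_subquotient_of_ufd_dim_two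
    (A : Type u) [CommRing A] [IsDomain A] [IsNoetherianRing A]
    [UniqueFactorizationMonoid A]
    (hdim : ringKrullDim A = 2)
    (P : Ideal A) (hP : P.IsPrime) (hPmax : ¬ P.IsMaximal) :
    ∀ I : Ideal A, ¬ ∃ f : ((A ⧸ P) × (A ⧸ P)) →ₗ[A] A ⧸ I, Function.Injective f :=
  square_not_subquotient_of_ufd_dim_two_general A hdim P hP hPmax
end

section
/- Let A be a noetherian commutative ring, M an A-module, and x a nonzero element of M. Then there exists a submodule N of M with x ∉ N such that M/N is artinian. In particular, every A-module is residually artinian. -/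
set_option synthInstance.maxHeartbeats 1000000
set_option maxHeartbeats 2000000

universe u v

open Submodule

namespace ResArtAux

variable {A : Type u} [CommRing A] {Q : Type v} [AddCommGroup Q] [Module A Q]

/-- The `m`-torsion filtration. -/
def L (m : Ideal A) (n : ℕ) : Submodule A Q :=
  Submodule.torsionBySet A Q ((m ^ n : Ideal A) : Set A)

lemma mem_L {m : Ideal A} {n : ℕ} {y : Q} : y ∈ L m n ↔ ∀ a ∈ m ^ n, a • y = 0 := by
  rw [L, Submodule.mem_torsionBySet_iff]
  exact ⟨fun h a ha => h ⟨a, ha⟩, fun h a => h a.1 a.2⟩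

lemma L_zero (m : Ideal A) : L (Q := Q) m 0 = ⊥ := by
  apply le_antisymm
  · intro y hy
    have := (mem_L.1 hy) 1 (by simp [Ideal.one_eq_top])
    simpa using this
  · exact bot_le

lemma L_le_succ (m : Ideal A) (n : ℕ) : L (Q := Q) m n ≤ L m (n + 1) := by
  intro y hy
  rw [mem_L] at hy ⊢
  exact fun a ha => hy a (Ideal.pow_le_pow_right (Nat.le_succ n) ha)

lemma smul_mem_L {m : Ideal A} {a : A} (ha : a ∈ m) {n : ℕ} {y : Q}
    (hy : y ∈ L m (n + 1)) : a • y ∈ L m n := by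
  rw [mem_L] at hy ⊢
  intro b hb
  rw [smul_smul]
  exact hy (b * a) (by rw [pow_succ]; exact Ideal.mul_mem_mul hb ha)

/-- If all generators of `m` send `y` into `L m n`, then `y ∈ L m (n+1)`. -/
lemma mem_L_succ {m : Ideal A} {s : Finset A} (hspan : Ideal.span (s : Set A) = m)
    {n : ℕ} {y : Q} (h : ∀ a ∈ s, a • y ∈ L m n) : y ∈ L m (n + 1) := by
  have hm : m ≤ Submodule.comap (LinearMap.toSpanSingleton A Q y) (L m n) := by
    have h1 : Ideal.span (s : Set A) ≤
        Submodule.comap (LinearMap.toSpanSingleton A Q y) (L m n) :=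
      Ideal.span_le.2 fun a ha => by simpa using h a ha
    exact hspan ▸ h1
  rw [mem_L]
  intro b hb
  rw [pow_succ] at hb
  refine Submodule.mul_induction_on hb (fun c hc d hd => ?_) (fun c d hc hd => ?_)
  · rw [mul_smul]
    have hdy : d • y ∈ L m n := hm hd
    exact mem_L.1 hdy c hc
  · rw [add_smul, hc, hd, add_zero]


variable (Q) in
/-- Multiplication by `a ∈ m` shifts the filtration down. -/
def mulMap {m : Ideal A} {a : A} (ha : a ∈ m) (n : ℕ) : L (Q := Q) m (n + 1) →ₗ[A] L (Q := Q) m n :=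
  LinearMap.codRestrict (L m n) ((LinearMap.lsmul A Q a).comp (L m (n + 1)).subtype)
    fun y => smul_mem_L ha y.2

@[simp] lemma mulMap_apply {m : Ideal A} {a : A} (ha : a ∈ m) (n : ℕ)
    (y : L (Q := Q) m (n + 1)) : ((mulMap Q ha n y : L (Q := Q) m n) : Q) = a • (y : Q) := rfl

variable (Q) in
/-- The home of the "graded dual". -/
abbrev PP (m : Ideal A) : Type (max u v) := (n : ℕ) → (L (Q := Q) m (n + 1) →ₗ[A] (A ⧸ m))

variable (Q) in
/-- The shift operators acting on `PP`. -/
def Tmap {m : Ideal A} {a : A} (ha : a ∈ m) : Module.End A (PP Q m) where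
  toFun f := fun n =>
    match n with
    | 0 => 0
    | (i + 1) => (f i).comp (mulMap Q ha (i + 1))
  map_add' f g := by
    funext n
    match n with
    | 0 => simp
    | (i + 1) => simp [LinearMap.add_comp]
  map_smul' c f := by
    funext n
    match n with
    | 0 => simp
    | (i + 1) => simp [LinearMap.smul_comp]

@[simp] lemma Tmap_apply_zero {m : Ideal A} {a : A} (ha : a ∈ m) (f : PP Q m) :
    Tmap Q ha f 0 = 0 := rfl

@[simp] lemma Tmap_apply_succ {m : Ideal A} {a : A} (ha : a ∈ m) (f : PP Q m) (i : ℕ) :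
    Tmap Q ha f (i + 1) = (f i).comp (mulMap Q ha (i + 1)) := rfl

lemma Tmap_comm {m : Ideal A} {a b : A} (ha : a ∈ m) (hb : b ∈ m) :
    Tmap Q ha * Tmap Q hb = Tmap Q hb * Tmap Q ha := by
  ext f n y
  match n with
  | 0 => rfl
  | 1 => rfl
  | (i + 2) =>
    show (f i) (mulMap Q hb (i+1) (mulMap Q ha (i+2) y))
      = (f i) (mulMap Q ha (i+1) (mulMap Q hb (i+2) y))
    congr 1
    apply Subtype.ext
    simp [smul_smul, mul_comm]

variable (Q) in
/-- Placing a functional in a single degree. -/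
def place (m : Ideal A) (n : ℕ) :
    (L (Q := Q) m (n + 1) →ₗ[A] (A ⧸ m)) →ₗ[A] PP Q m where
  toFun ψ := Function.update (0 : PP Q m) n ψ
  map_add' ψ φ := by
    funext i
    by_cases h : i = n
    · subst h; simp [Function.update_self]
    · simp [Function.update_of_ne h]
  map_smul' c ψ := by
    funext i
    by_cases h : i = n
    · subst h; simp [Function.update_self]
    · simp [Function.update_of_ne h]

@[simp] lemma place_same {m : Ideal A} (n : ℕ) (ψ : L (Q := Q) m (n + 1) →ₗ[A] (A ⧸ m)) :
    place Q m n ψ n = ψ := by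
  simp [place, Function.update_self]

lemma place_noteq {m : Ideal A} {n i : ℕ} (h : i ≠ n)
    (ψ : L (Q := Q) m (n + 1) →ₗ[A] (A ⧸ m)) : place Q m n ψ i = 0 := by
  simp [place, Function.update_of_ne h]


section Dual

variable (Q)
variable (m : Ideal A) (s : Finset A) (hs : ∀ a ∈ s, a ∈ m)

/-- The generating shift operators. -/
def sT : Set (Module.End A (PP Q m)) :=
  Set.range fun j : {a // a ∈ s} => Tmap Q (hs j.1 j.2)

/-- The commutative subalgebra of operators generated by the shifts. -/
def BB : Subalgebra A (Module.End A (PP Q m)) := Algebra.adjoin A (sT Q m s hs)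

instance instModuleBB : Module ↥(BB Q m s hs) (PP Q m) :=
  Subalgebra.moduleLeft (BB Q m s hs)

lemma Tmap_mem_BB {a : A} (ha : a ∈ s) : Tmap Q (hs a ha) ∈ BB Q m s hs :=
  Algebra.subset_adjoin ⟨⟨a, ha⟩, rfl⟩

lemma smul_BB_def (b : ↥(BB Q m s hs)) (f : PP Q m) :
    b • f = (b : Module.End A (PP Q m)) f := rfl

lemma smul_A_eq_algebraMap_smul (a : A) (f : PP Q m) :
    a • f = (algebraMap A ↥(BB Q m s hs) a) • f := by
  rw [smul_BB_def]
  have : ((algebraMap A ↥(BB Q m s hs) a : ↥(BB Q m s hs)) : Module.End A (PP Q m))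
      = algebraMap A (Module.End A (PP Q m)) a := rfl
  rw [this, Module.algebraMap_end_apply]

/-- The orthogonal of a submodule `N` of `Q` inside `PP`. -/
def cSub (N : Submodule A Q) : Submodule ↥(BB Q m s hs) (PP Q m) where
  carrier := {f | ∀ (n : ℕ) (y : L (Q := Q) m (n + 1)), (y : Q) ∈ N → f n y = 0}
  zero_mem' := fun n y _ => rfl
  add_mem' := by
    intro f g hf hg n y hy
    show f n y + g n y = 0
    rw [hf n y hy, hg n y hy, add_zero]
  smul_mem' := by
    intro b f hf
    rw [smul_BB_def]
    have hb := b.2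
    revert f
    show ∀ f, _ → _
    refine Algebra.adjoin_induction
      (s := sT Q m s hs)
      (p := fun g _ => ∀ f : PP Q m,
        (f ∈ {f : PP Q m | ∀ (n : ℕ) (y : L (Q := Q) m (n + 1)), (y : Q) ∈ N → f n y = 0}) →
        g f ∈ {f : PP Q m | ∀ (n : ℕ) (y : L (Q := Q) m (n + 1)), (y : Q) ∈ N → f n y = 0})
      ?_ ?_ ?_ ?_ hb
    · rintro g ⟨j, rfl⟩ f hf n y hy
      match n with
      | 0 => rfl
      | (i + 1) =>
        show f i (mulMap Q (hs j.1 j.2) (i + 1) y) = 0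
        exact hf i _ (by rw [mulMap_apply]; exact N.smul_mem _ hy)
    · intro r f hf n y hy
      rw [Module.algebraMap_end_apply]
      show (r • f n) y = 0
      show r • (f n y) = 0
      rw [hf n y hy, smul_zero]
    · intro g₁ g₂ _ _ h₁ h₂ f hf n y hy
      show (g₁ f) n y + (g₂ f) n y = 0
      rw [h₁ f hf n y hy, h₂ f hf n y hy, add_zero]
    · intro g₁ g₂ _ _ h₁ h₂ f hf n y hy
      show (g₁ (g₂ f)) n y = 0
      exact h₁ (g₂ f) (h₂ f hf) n y hy

lemma mem_cSub {N : Submodule A Q} {f : PP Q m} :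
    f ∈ cSub Q m s hs N ↔ ∀ (n : ℕ) (y : L (Q := Q) m (n + 1)), (y : Q) ∈ N → f n y = 0 :=
  Iff.rfl

lemma cSub_anti {N N' : Submodule A Q} (h : N ≤ N') :
    cSub Q m s hs N' ≤ cSub Q m s hs N :=
  fun _ hf n y hy => hf n y (h hy)

/-- The "co-finitely generated dual" submodule. -/
def DD (G : Set (L (Q := Q) m 1 →ₗ[A] (A ⧸ m))) : Submodule ↥(BB Q m s hs) (PP Q m) :=
  Submodule.span ↥(BB Q m s hs) ((place Q m 0) '' G)


/-- Key generation lemma: any functional placed in degree `n` which kills the `n`-th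
filtration step lies in the module generated by degree-zero functionals under the shifts. -/
theorem place_mem_DD (hm : m.IsMaximal) (hspan : Ideal.span (s : Set A) = m)
    (G : Set (L (Q := Q) m 1 →ₗ[A] (A ⧸ m)))
    (hG : ∀ φ : (L (Q := Q) m 1 →ₗ[A] (A ⧸ m)), φ ∈ Submodule.span A G) :
    ∀ (n : ℕ) (ψ : L (Q := Q) m (n + 1) →ₗ[A] (A ⧸ m)),
      (∀ y : L (Q := Q) m (n + 1), (y : Q) ∈ L m n → ψ y = 0) →
      place Q m n ψ ∈ DD Q m s hs G := by
  intro n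
  induction n with
  | zero =>
    intro ψ _
    refine Submodule.span_induction (p := fun φ _ => place Q m 0 φ ∈ DD Q m s hs G)
      ?_ ?_ ?_ ?_ (hG ψ)
    · intro φ hφ
      exact Submodule.subset_span ⟨φ, hφ, rfl⟩
    · show place Q m 0 0 ∈ DD Q m s hs G
      rw [map_zero]; exact Submodule.zero_mem _
    · intro φ₁ φ₂ _ _ h₁ h₂
      show place Q m 0 (φ₁ + φ₂) ∈ DD Q m s hs G
      rw [map_add]; exact Submodule.add_mem _ h₁ h₂
    · intro a φ _ h
      show place Q m 0 (a • φ) ∈ DD Q m s hs G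
      rw [map_smul, smul_A_eq_algebraMap_smul Q m s hs]
      exact Submodule.smul_mem _ _ h
  | succ n ih =>
    intro ψ hψ
    letI : DecidableEq A := Classical.decEq A
    haveI := hm
    letI : Field (A ⧸ m) := Ideal.Quotient.field m
    set Wn : Submodule A ↥(L (Q := Q) m (n + 1)) :=
      (L (Q := Q) m n).comap (L (Q := Q) m (n + 1)).subtype with hWn
    have htorV : Module.IsTorsionBySet A (↥(L (Q := Q) m (n + 1)) ⧸ Wn) ↑m := by
      intro v a
      obtain ⟨y, rfl⟩ := Submodule.Quotient.mk_surjective _ v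
      rw [← Submodule.Quotient.mk_smul, Submodule.Quotient.mk_eq_zero]
      show ((a : A) • y : ↥(L (Q := Q) m (n+1))).1 ∈ L (Q := Q) m n
      exact smul_mem_L a.2 y.2
    letI : Module (A ⧸ m) (↥(L (Q := Q) m (n + 1)) ⧸ Wn) := htorV.module
    haveI : IsScalarTower A (A ⧸ m) (↥(L (Q := Q) m (n + 1)) ⧸ Wn) := htorV.isScalarTower
    set α : ↥(L (Q := Q) m (n + 2)) →ₗ[A] ({a // a ∈ s} → ↥(L (Q := Q) m (n + 1)) ⧸ Wn) :=
      LinearMap.pi (fun j => Wn.mkQ ∘ₗ (mulMap Q (hs j.1 j.2) (n + 1))) with hα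
    have hkerα : ∀ y : ↥(L (Q := Q) m (n + 2)), α y = 0 → (y : Q) ∈ L (Q := Q) m (n + 1) := by
      intro y hy
      refine mem_L_succ hspan (fun a ha => ?_)
      have h1 : Wn.mkQ (mulMap Q (hs a ha) (n + 1) y) = 0 := by
        have := congrFun hy ⟨a, ha⟩
        simpa [hα, LinearMap.pi_apply] using this
      rw [Submodule.mkQ_apply, Submodule.Quotient.mk_eq_zero] at h1
      exact h1
    have hkerψ : LinearMap.ker α ≤ LinearMap.ker ψ := by
      intro y hy
      rw [LinearMap.mem_ker] at hy ⊢
      exact hψ y (hkerα y hy)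
    have htorX : Module.IsTorsionBySet A (↥(L (Q := Q) m (n + 2)) ⧸ LinearMap.ker α) ↑m := by
      intro v a
      obtain ⟨y, rfl⟩ := Submodule.Quotient.mk_surjective _ v
      rw [← Submodule.Quotient.mk_smul, Submodule.Quotient.mk_eq_zero, LinearMap.mem_ker]
      funext j
      show Wn.mkQ (mulMap Q (hs j.1 j.2) (n + 1) ((a : A) • y)) = 0
      rw [Submodule.mkQ_apply, Submodule.Quotient.mk_eq_zero]
      show (mulMap Q (hs j.1 j.2) (n + 1) ((a : A) • y) : Q) ∈ L (Q := Q) m n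
      rw [mulMap_apply]
      have h1 : ((a : A) • y : ↥(L (Q := Q) m (n+2))).1 = (a : A) • (y : Q) := rfl
      rw [h1]
      exact smul_mem_L (hs j.1 j.2) (smul_mem_L a.2 y.2)
    letI : Module (A ⧸ m) (↥(L (Q := Q) m (n + 2)) ⧸ LinearMap.ker α) := htorX.module
    haveI : IsScalarTower A (A ⧸ m) (↥(L (Q := Q) m (n + 2)) ⧸ LinearMap.ker α) :=
      htorX.isScalarTower
    have surj : Function.Surjective (algebraMap A (A ⧸ m)) := Ideal.Quotient.mk_surjective
    set αbar := (LinearMap.ker α).liftQ α le_rfl with hαbar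
    set ψX := (LinearMap.ker α).liftQ ψ hkerψ with hψX
    set αk := αbar.extendScalarsOfSurjective surj with hαk
    set ψk := ψX.extendScalarsOfSurjective surj with hψk
    have hinj : LinearMap.ker αk = ⊥ := by
      rw [LinearMap.ker_eq_bot']
      intro x hx
      obtain ⟨y, rfl⟩ := Submodule.Quotient.mk_surjective _ x
      have : αbar (Submodule.Quotient.mk y) = 0 := by
        rw [← hx]; rfl
      rw [Submodule.liftQ_apply] at this
      rw [Submodule.Quotient.mk_eq_zero, LinearMap.mem_ker]
      exact this
    obtain ⟨g, hg⟩ := αk.exists_leftInverse_of_injective hinj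
    set Φ := ψk ∘ₗ g with hΦdef
    have hΦ : ∀ y : ↥(L (Q := Q) m (n + 2)), Φ (α y) = ψ y := by
      intro y
      have h1 : α y = αk (Submodule.Quotient.mk y) := rfl
      rw [h1, hΦdef, LinearMap.comp_apply]
      have h2 : g (αk (Submodule.Quotient.mk y)) = (g ∘ₗ αk) (Submodule.Quotient.mk y) := rfl
      rw [h2, hg]
      rfl
    set ψj : {a // a ∈ s} → (↥(L (Q := Q) m (n + 1)) →ₗ[A] (A ⧸ m)) := fun j =>
      ((Φ ∘ₗ LinearMap.single (A ⧸ m) (fun _ => ↥(L (Q := Q) m (n + 1)) ⧸ Wn) j).restrictScalars A)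
        ∘ₗ Wn.mkQ with hψj
    have hψj_vanish : ∀ (j) (y : ↥(L (Q := Q) m (n + 1))), (y : Q) ∈ L (Q := Q) m n →
        ψj j y = 0 := by
      intro j y hy
      have : Wn.mkQ y = 0 := by
        rw [Submodule.mkQ_apply, Submodule.Quotient.mk_eq_zero]
        exact hy
      rw [hψj]
      simp only [LinearMap.comp_apply, this, map_zero]
    have hsum : ψ = ∑ j : {a // a ∈ s}, (ψj j) ∘ₗ (mulMap Q (hs j.1 j.2) (n + 1)) := by
      ext y
      rw [LinearMap.sum_apply]
      have h1 : ∀ j : {a // a ∈ s},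
          ((ψj j) ∘ₗ mulMap Q (hs j.1 j.2) (n + 1)) y
            = Φ (Pi.single j (α y j)) := by
        intro j
        rfl
      rw [Finset.sum_congr rfl (fun j _ => h1 j)]
      rw [← map_sum]
      rw [Finset.univ_sum_single (α y)]
      exact (hΦ y).symm
    have hkey : place Q m (n + 1) ψ = ∑ j : {a // a ∈ s},
        (⟨Tmap Q (hs j.1 j.2), Tmap_mem_BB Q m s hs j.2⟩ : ↥(BB Q m s hs)) •
          place Q m n (ψj j) := by
      funext i
      rw [Finset.sum_apply]
      match i with
      | 0 =>
        rw [place_noteq (Nat.succ_ne_zero n).symm]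
        simp only [smul_BB_def, Tmap_apply_zero]
        rw [Finset.sum_const, smul_zero]
      | (l + 1) =>
        by_cases h : l = n
        · subst h
          rw [place_same]
          have h2 : ∀ j : {a // a ∈ s},
              ((⟨Tmap Q (hs j.1 j.2), Tmap_mem_BB Q m s hs j.2⟩ : ↥(BB Q m s hs)) •
                place Q m l (ψj j)) (l + 1) = (ψj j) ∘ₗ (mulMap Q (hs j.1 j.2) (l + 1)) := by
            intro j
            rw [smul_BB_def, Tmap_apply_succ, place_same]
          rw [Finset.sum_congr rfl (fun j _ => h2 j)]
          exact hsum
        · rw [place_noteq (fun hc => h (Nat.succ_injective hc))]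
          have h2 : ∀ j : {a // a ∈ s},
              ((⟨Tmap Q (hs j.1 j.2), Tmap_mem_BB Q m s hs j.2⟩ : ↥(BB Q m s hs)) •
                place Q m n (ψj j)) (l + 1) = 0 := by
            intro j
            rw [smul_BB_def, Tmap_apply_succ, place_noteq h, LinearMap.zero_comp]
          rw [Finset.sum_congr rfl (fun j _ => h2 j), Finset.sum_const, smul_zero]
    rw [hkey]
    exact Submodule.sum_mem _ fun j _ =>
      Submodule.smul_mem _ _ (ih (ψj j) (hψj_vanish j))


lemma exists_sep (htor : ∀ y : Q, ∃ n, y ∈ L (Q := Q) m n) {N N' : Submodule A Q} (h : N < N') :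
    ∃ (n : ℕ) (y : ↥(L (Q := Q) m (n + 1))),
      (y : Q) ∈ N' ∧ (y : Q) ∉ N ⊔ L (Q := Q) m n := by
  by_contra hc
  push_neg at hc
  have key : ∀ (n : ℕ) (y : Q), y ∈ N' → y ∈ L (Q := Q) m n → y ∈ N := by
    intro n
    induction n with
    | zero =>
      intro y _ hy
      rw [L_zero] at hy
      have : y = 0 := by simpa using hy
      rw [this]
      exact N.zero_mem
    | succ n ihn =>
      intro y hyN' hyL
      have h1 : y ∈ N ⊔ L (Q := Q) m n := hc n ⟨y, hyL⟩ hyN'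
      obtain ⟨z, hz, w, hw, rfl⟩ := Submodule.mem_sup.1 h1
      have hwN' : w ∈ N' := by
        simpa [add_sub_cancel_left] using Submodule.sub_mem N' hyN' (h.le hz)
      exact Submodule.add_mem _ hz (ihn w hwN' hw)
  have : N' ≤ N := by
    intro y hy
    obtain ⟨n, hn⟩ := htor y
    exact key n y hy hn
  exact h.not_ge this

lemma exists_func (hm : m.IsMaximal) (N : Submodule A Q) (n : ℕ)
    (y' : ↥(L (Q := Q) m (n + 1))) (hy' : (y' : Q) ∉ N ⊔ L (Q := Q) m n) :
    ∃ ψ : L (Q := Q) m (n + 1) →ₗ[A] (A ⧸ m),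
      (∀ y : ↥(L (Q := Q) m (n + 1)), (y : Q) ∈ N ⊔ L (Q := Q) m n → ψ y = 0) ∧ ψ y' ≠ 0 := by
  haveI := hm
  letI : Field (A ⧸ m) := Ideal.Quotient.field m
  set W : Submodule A ↥(L (Q := Q) m (n + 1)) :=
    (N ⊔ L (Q := Q) m n).comap (L (Q := Q) m (n + 1)).subtype with hW
  have htorZ : Module.IsTorsionBySet A (↥(L (Q := Q) m (n + 1)) ⧸ W) ↑m := by
    intro v a
    obtain ⟨y, rfl⟩ := Submodule.Quotient.mk_surjective _ v
    rw [← Submodule.Quotient.mk_smul, Submodule.Quotient.mk_eq_zero]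
    show ((a : A) • y : ↥(L (Q := Q) m (n + 1))).1 ∈ N ⊔ L (Q := Q) m n
    exact Submodule.mem_sup_right (smul_mem_L a.2 y.2)
  letI : Module (A ⧸ m) (↥(L (Q := Q) m (n + 1)) ⧸ W) := htorZ.module
  haveI : IsScalarTower A (A ⧸ m) (↥(L (Q := Q) m (n + 1)) ⧸ W) := htorZ.isScalarTower
  have hv : (Submodule.Quotient.mk y' : ↥(L (Q := Q) m (n + 1)) ⧸ W) ≠ 0 := by
    rw [ne_eq, Submodule.Quotient.mk_eq_zero]
    exact hy'
  have hφ : ∃ φ : Module.Dual (A ⧸ m) (↥(L (Q := Q) m (n + 1)) ⧸ W),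
      φ (Submodule.Quotient.mk y') ≠ 0 := by
    by_contra hcon
    push_neg at hcon
    exact hv ((Module.forall_dual_apply_eq_zero_iff (A ⧸ m) _).1 hcon)
  obtain ⟨φ, hφ⟩ := hφ
  refine ⟨(φ.restrictScalars A) ∘ₗ W.mkQ, fun y hy => ?_, ?_⟩
  · have : W.mkQ y = 0 := by
      rw [Submodule.mkQ_apply, Submodule.Quotient.mk_eq_zero]
      exact hy
    simp [this]
  · simpa using hφ

/-- The main auxiliary criterion: a module all whose elements are `m`-power-torsion,
with socle contained in a cyclic module, is artinian. -/
theorem isArtinian_aux [IsNoetherianRing A] (hm : m.IsMaximal) (e : Q)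
    (he : ∀ a ∈ m, a • e = 0)
    (hsoc : ∀ y : Q, (∀ a ∈ m, a • y = 0) → y ∈ Submodule.span A {e})
    (htor : ∀ y : Q, ∃ n, y ∈ L (Q := Q) m n) : IsArtinian A Q := by
  obtain ⟨s, hspan⟩ : ∃ s : Finset A, Ideal.span (s : Set A) = m := IsNoetherian.noetherian m
  have hs : ∀ a ∈ s, a ∈ m := fun a ha => hspan ▸ Ideal.subset_span ha
  have he1 : e ∈ L (Q := Q) m 1 := by
    rw [mem_L]
    intro a ha
    rw [pow_one] at ha
    exact he a ha
  -- the degree-zero dual is a noetherian A-module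
  have hinj : Function.Injective
      (LinearMap.applyₗ (⟨e, he1⟩ : ↥(L (Q := Q) m 1)) :
        (↥(L (Q := Q) m 1) →ₗ[A] (A ⧸ m)) →ₗ[A] (A ⧸ m)) := by
    intro φ₁ φ₂ hφ
    ext y
    have hy : (y : Q) ∈ Submodule.span A {e} := by
      apply hsoc
      intro a ha
      exact mem_L.1 y.2 a (by rwa [pow_one])
    obtain ⟨c, hc⟩ := Submodule.mem_span_singleton.1 hy
    have hyc : (y : ↥(L (Q := Q) m 1)) = c • ⟨e, he1⟩ := by
      apply Subtype.ext
      exact hc.symm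
    rw [hyc, map_smul, map_smul]
    have : φ₁ ⟨e, he1⟩ = φ₂ ⟨e, he1⟩ := hφ
    rw [this]
  haveI : IsNoetherian A (↥(L (Q := Q) m 1) →ₗ[A] (A ⧸ m)) :=
    isNoetherian_of_injective _ hinj
  obtain ⟨G, hGspan⟩ := IsNoetherian.noetherian
    (⊤ : Submodule A (↥(L (Q := Q) m 1) →ₗ[A] (A ⧸ m)))
  have hG : ∀ φ : (↥(L (Q := Q) m 1) →ₗ[A] (A ⧸ m)), φ ∈ Submodule.span A (G : Set _) := by
    intro φ
    rw [hGspan]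
    trivial
  -- the commutative noetherian operator algebra
  have hc : ∀ a ∈ sT Q m s hs, ∀ b ∈ sT Q m s hs, a * b = b * a := by
    rintro g ⟨j, rfl⟩ g' ⟨j', rfl⟩
    exact Tmap_comm (hs j.1 j.2) (hs j'.1 j'.2)
  letI : CommRing ↥(BB Q m s hs) := @CommRing.mk _
    (@Subalgebra.toRing A (Module.End A (PP Q m)) _ Module.End.instRing _ (BB Q m s hs)) (fun a b =>
    Subtype.ext (Algebra.commute_of_mem_adjoin_of_forall_mem_commute (R := A) b.2
      (fun c hcs => (Algebra.commute_of_mem_adjoin_of_forall_mem_commute (R := A) a.2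
        (fun d hd => hc c hcs d hd)).symm)).eq)
  haveI : Algebra.FiniteType A ↥(BB Q m s hs) := by
    rw [← Subalgebra.fg_iff_finiteType]
    exact ⟨(Set.finite_range _).toFinset, by rw [Set.Finite.coe_toFinset]; rfl⟩
  haveI : IsNoetherianRing ↥(BB Q m s hs) := Algebra.FiniteType.isNoetherianRing A _
  -- the cofinitely generated dual
  have hfg : (DD Q m s hs (G : Set _)).FG :=
    Submodule.fg_span ((G.finite_toSet).image _)
  haveI : IsNoetherian ↥(BB Q m s hs) ↥(DD Q m s hs (G : Set _)) :=
    isNoetherian_of_fg_of_noetherian _ hfg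
  have hwf : WellFounded ((· > ·) :
      Submodule ↥(BB Q m s hs) ↥(DD Q m s hs (G : Set _)) → _ → Prop) :=
    isNoetherian_iff.1 inferInstance
  let gmap : Submodule A Q → Submodule ↥(BB Q m s hs) ↥(DD Q m s hs (↑G : Set (↥(L (Q := Q) m 1) →ₗ[A] (A ⧸ m)))) :=
    fun N => (cSub Q m s hs N).comap (DD Q m s hs (↑G : Set (↥(L (Q := Q) m 1) →ₗ[A] (A ⧸ m)))).subtype
  have hstrict : ∀ N N' : Submodule A Q, N < N' → gmap N' < gmap N := by
    intro N N' h
    obtain ⟨n, y', hy'N', hy'sup⟩ := exists_sep Q m htor h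
    obtain ⟨ψ, hψvan, hψy'⟩ := exists_func Q m hm N n y' hy'sup
    have hψLn : ∀ y : ↥(L (Q := Q) m (n + 1)), (y : Q) ∈ L (Q := Q) m n → ψ y = 0 :=
      fun y hy => hψvan y (Submodule.mem_sup_right hy)
    have hfD : place Q m n ψ ∈ DD Q m s hs (G : Set _) :=
      place_mem_DD Q m s hs hm hspan _ hG n ψ hψLn
    have hfc : place Q m n ψ ∈ cSub Q m s hs N := by
      intro i y hy
      by_cases hin : i = n
      · subst hin
        rw [place_same]
        exact hψvan y (Submodule.mem_sup_left hy)
      · rw [place_noteq hin]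
        rfl
    have hfnot : place Q m n ψ ∉ cSub Q m s hs N' := by
      intro hcon
      have := hcon n y' hy'N'
      rw [place_same] at this
      exact hψy' this
    rw [SetLike.lt_iff_le_and_exists]
    refine ⟨Submodule.comap_mono (cSub_anti Q m s hs h.le), ⟨place Q m n ψ, hfD⟩, ?_, ?_⟩
    · exact hfc
    · exact hfnot
  refine ⟨Subrelation.wf (r := InvImage (· > ·) gmap) ?_ (InvImage.wf gmap hwf)⟩
  intro N N' h
  exact hstrict N N' h

end Dual

end ResArtAux

/-- Let `A` be a noetherian commutative ring, `M` an `A`-module and `x` a nonzero element of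
`M`. Then there is a submodule `N` of `M` with `x ∉ N` such that `M/N` is artinian.
In particular, every `A`-module is residually artinian. -/
theorem exists_artinian_quotient_avoiding
    {A : Type u} [CommRing A] [IsNoetherianRing A]
    {M : Type v} [AddCommGroup M] [Module A M]
    (x : M) (hx : x ≠ 0) :
    ∃ N : Submodule A M, x ∉ N ∧ IsArtinian A (M ⧸ N) := by
  classical
  -- Zorn: a submodule maximal among those avoiding `x`
  obtain ⟨N₀, -, hN₀⟩ := zorn_le_nonempty₀ {N : Submodule A M | x ∉ N}
    (fun c hc hchain N hN => by
      refine ⟨sSup c, ?_, fun z hz => le_sSup hz⟩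
      intro hxs
      obtain ⟨N', hN'c, hxN'⟩ := (Submodule.mem_sSup_of_directed ⟨N, hN⟩
        (hchain.directedOn)).1 hxs
      exact hc hN'c hxN')
    ⊥ (by simpa using hx)
  have hxN₀ : x ∉ N₀ := hN₀.prop
  set e : M ⧸ N₀ := N₀.mkQ x with hedef
  have he0 : e ≠ 0 := by
    rw [hedef, ne_eq, Submodule.mkQ_apply, Submodule.Quotient.mk_eq_zero]
    exact hxN₀
  -- every nonzero submodule of the quotient contains `e`
  have hkeyP : ∀ P : Submodule A (M ⧸ N₀), P ≠ ⊥ → e ∈ P := by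
    intro P hP
    set C := P.comap N₀.mkQ with hC
    have hN₀C : N₀ ≤ C := by
      intro z hz
      show N₀.mkQ z ∈ P
      have : N₀.mkQ z = 0 := by
        rw [Submodule.mkQ_apply, Submodule.Quotient.mk_eq_zero]; exact hz
      rw [this]; exact P.zero_mem
    by_cases hxC : x ∈ C
    · exact hxC
    · exfalso
      have hCS : C ∈ {N : Submodule A M | x ∉ N} := hxC
      have hCN₀ : C ≤ N₀ := hN₀.2 hCS hN₀C
      apply hP
      have hmap : Submodule.map N₀.mkQ C = P := by
        rw [hC, Submodule.map_comap_eq, Submodule.range_mkQ, top_inf_eq]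
      rw [← hmap]
      apply le_bot_iff.1
      intro w hw
      obtain ⟨z, hz, rfl⟩ := hw
      have hzN₀ : z ∈ N₀ := hCN₀ hz
      show N₀.mkQ z ∈ (⊥ : Submodule A (M ⧸ N₀))
      have : N₀.mkQ z = 0 := by
        rw [Submodule.mkQ_apply, Submodule.Quotient.mk_eq_zero]; exact hzN₀
      rw [this]; exact Submodule.zero_mem ⊥
  have hkey : ∀ y : M ⧸ N₀, y ≠ 0 → e ∈ Submodule.span A {y} := by
    intro y hy
    apply hkeyP
    rw [ne_eq, Submodule.span_singleton_eq_bot]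
    exact hy
  -- the annihilator of `e`
  set m : Ideal A := LinearMap.ker (LinearMap.toSpanSingleton A (M ⧸ N₀) e) with hmdef
  have hmem : ∀ a : A, a ∈ m ↔ a • e = 0 := by
    intro a
    rw [hmdef, LinearMap.mem_ker, LinearMap.toSpanSingleton_apply]
  have he : ∀ a ∈ m, a • e = 0 := fun a ha => (hmem a).1 ha
  -- `m` is maximal
  have hm : m.IsMaximal := by
    rw [Ideal.isMaximal_iff]
    constructor
    · intro h1
      apply he0
      have := (hmem 1).1 h1
      simpa using this
    · intro J b hmJ hbm hbJ
      have hbe : b • e ≠ 0 := fun hc => hbm ((hmem b).2 hc)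
      obtain ⟨c, hc⟩ := Submodule.mem_span_singleton.1 (hkey (b • e) hbe)
      have h1cb : 1 - c * b ∈ m := by
        rw [hmem]
        rw [sub_smul, one_smul, mul_smul, hc, sub_self]
      have : (1 : A) = (1 - c * b) + c * b := by ring
      rw [this]
      exact J.add_mem (hmJ h1cb) (J.mul_mem_left c hbJ)
  -- every element is `m`-power torsion
  have htor : ∀ y : M ⧸ N₀, ∃ n, y ∈ ResArtAux.L (Q := M ⧸ N₀) m n := by
    intro y
    by_cases hy0 : y = 0
    · exact ⟨0, hy0 ▸ Submodule.zero_mem _⟩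
    have hnil : ∀ s ∈ m, ∃ n : ℕ, s ^ n • y = 0 := by
      intro t ht
      by_contra hcon
      push_neg at hcon
      set f : ℕ →o Ideal A :=
        ⟨fun n => LinearMap.ker (LinearMap.toSpanSingleton A (M ⧸ N₀) (t ^ n • y)),
         monotone_nat_of_le_succ (by
          intro n a ha
          rw [LinearMap.mem_ker, LinearMap.toSpanSingleton_apply] at ha ⊢
          rw [pow_succ, mul_comm, mul_smul, smul_comm, ha, smul_zero])⟩ with hf
      obtain ⟨n, hn⟩ := (monotone_stabilizes_iff_noetherian.2 inferInstance) f
      have hstab : f n = f (n + 1) := hn (n + 1) (Nat.le_succ n)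
      obtain ⟨c, hc⟩ := Submodule.mem_span_singleton.1 (hkey (t ^ (n + 1) • y) (hcon (n + 1)))
      have hcs : c * t ∈ f (n + 1) := by
        show c * t ∈ LinearMap.ker (LinearMap.toSpanSingleton A (M ⧸ N₀) (t ^ (n + 1) • y))
        rw [LinearMap.mem_ker, LinearMap.toSpanSingleton_apply]
        rw [mul_smul, smul_comm c t, hc]
        exact he t ht
      rw [← hstab] at hcs
      have : (c * t) • (t ^ n • y) = 0 := by
        have h3 : c * t ∈ LinearMap.ker (LinearMap.toSpanSingleton A (M ⧸ N₀) (t ^ n • y)) := hcs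
        rw [LinearMap.mem_ker, LinearMap.toSpanSingleton_apply] at h3
        exact h3
      apply he0
      rw [← hc]
      have h2 : t ^ (n + 1) • y = t • t ^ n • y := by rw [pow_succ', mul_smul]
      rw [h2, ← mul_smul]
      exact this
    have hle : m ≤ Ideal.radical (LinearMap.ker (LinearMap.toSpanSingleton A (M ⧸ N₀) y)) := by
      intro t ht
      obtain ⟨n, hn⟩ := hnil t ht
      exact ⟨n, by rw [LinearMap.mem_ker, LinearMap.toSpanSingleton_apply]; exact hn⟩
    obtain ⟨n, hn⟩ := Ideal.exists_pow_le_of_le_radical_of_fg hle (IsNoetherian.noetherian m)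
    refine ⟨n, ResArtAux.mem_L.2 fun a ha => ?_⟩
    have := hn ha
    rw [LinearMap.mem_ker, LinearMap.toSpanSingleton_apply] at this
    exact this
  -- the socle is contained in the span of `e`
  have hsoc : ∀ y : M ⧸ N₀, (∀ a ∈ m, a • y = 0) → y ∈ Submodule.span A {e} := by
    intro y hy
    by_cases hy0 : y = 0
    · rw [hy0]; exact Submodule.zero_mem _
    obtain ⟨c, hc⟩ := Submodule.mem_span_singleton.1 (hkey y hy0)
    have hcm : c ∉ m := by
      intro hcmem
      apply he0
      rw [← hc]
      exact hy c hcmem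
    obtain ⟨d, z, hzm, hdz⟩ := hm.exists_inv hcm
    rw [Submodule.mem_span_singleton]
    refine ⟨d, ?_⟩
    have : y = (d * c + z) • y := by rw [hdz, one_smul]
    rw [this, add_smul, mul_smul, hc, hy z hzm, add_zero]
  exact ⟨N₀, hxN₀, ResArtAux.isArtinian_aux (M ⧸ N₀) m hm e he hsoc htor⟩
end

section
/- Let A be a noetherian commutative ring and M an A-module. Endow the set Sub(M) of submodules of M with the topology induced by the inclusion N ↦ (underlying set of N) into the power set 2^M (with the product topology). (1) If N is an isolated point of Sub(M), then N is finitely generated and M/N is artinian; in particular, if Sub(M) has an isolated point then M is minimax. (2) If every simple A-module is finite, then conversely N is an isolated point of Sub(M) if and only if N is finitely generated and M/N is artinian, and Sub(M) has an isolated point if and only if M is minimax. -/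
open Classical in
/-- The topology on the set of submodules of `M` induced by the inclusion
`N ↦ (indicator of N)` into the power set `2^M`, the latter carrying the product topology
(each factor `{0,1}` being discrete). -/
noncomputable def submoduleTopology (A : Type u) [CommRing A]
    (M : Type v) [AddCommGroup M] [Module A M] :
    TopologicalSpace (Submodule A M) :=
  TopologicalSpace.induced
    (fun (N : Submodule A M) (m : M) => (decide (m ∈ N) : Bool)) inferInstance

/-- `N` is an isolated point of `Sub(M)` for the topology induced from `2^M`. -/
def IsIsolatedSubmodule (A : Type u) [CommRing A]
    (M : Type v) [AddCommGroup M] [Module A M] (N : Submodule A M) : Prop :=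
  @IsOpen (Submodule A M) (submoduleTopology A M) {N}

/-!
An isolated point `N` of `Sub(M)` is cut out by finitely many conditions `e ∈ P ↔ e ∈ N`,
`e ∈ E`. Taking `P = span (E ∩ N)` shows that `N` is finitely generated, and the images of
`E \ N` form a finite set `H` of nonzero vectors of `M ⧸ N` meeting every nonzero submodule.
Over a noetherian ring such a module `Q` is artinian. By Krull's intersection theorem every
element of `Q` is killed by a power of `I = Ann (span H)`, and every associated prime of `Q` is
maximal; hence `A ⧸ √I` is a semisimple ring, the `√I`-torsion of `Q` is spanned by elements
of `H`, and Melkersson's criterion (a module that is `J`-power torsion and whose `J`-torsion is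
artinian is artinian) applies.

Conversely, if `N = span F` and `M ⧸ N` is artinian, the socle of `M ⧸ N` is essential and is a
finite sum of simple modules, hence finite when simple modules are. Then `F` together with
lifts of the nonzero socle elements cuts out `N`.
-/

universe u v

open Submodule Pointwise

section Melkersson

variable {A : Type u} [CommRing A] {X : Type v} [AddCommGroup X] [Module A X]

lemma exists_forall_eq_of_antitone_of_le (K : Submodule A X) [IsArtinian A K]
    {f : ℕ → Submodule A X} (hf : Antitone f) (hfK : ∀ n, f n ≤ K) :
    ∃ s, ∀ n, s ≤ n → f n = f s := by
  obtain ⟨s, hs⟩ := IsArtinian.monotone_stabilizes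
    ⟨fun n => OrderDual.toDual ((f n).comap K.subtype), fun _ _ h => comap_mono (hf h)⟩
  refine ⟨s, fun n hn => ?_⟩
  have h : (f s).comap K.subtype = (f n).comap K.subtype := hs n hn
  replace h := congrArg (map K.subtype) h
  rwa [map_comap_subtype, map_comap_subtype, inf_eq_right.mpr (hfK n),
    inf_eq_right.mpr (hfK s), eq_comm] at h

lemma exists_forall_inf_le_of_antitone (K : Submodule A X) [IsArtinian A K]
    {f : ℕ → Submodule A X} (hf : Antitone f) : ∃ s, ∀ n, f s ⊓ K ≤ f n := by
  obtain ⟨s, hs⟩ := exists_forall_eq_of_antitone_of_le K (f := fun n => f n ⊓ K)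
    (fun _ _ h => inf_le_inf_right K (hf h)) fun _ => inf_le_right
  refine ⟨s, fun n => ?_⟩
  rcases le_total s n with h | h
  · exact (hs n h).ge.trans inf_le_left
  · exact inf_le_left.trans (hf h)

variable (x : A)

lemma isArtinian_torsionBy_submodule (P : Submodule A X) [IsArtinian A (torsionBy A X x)] :
    IsArtinian A (torsionBy A P x) :=
  isArtinian_of_injective (P.subtype.restrict (q := torsionBy A X x) fun y hy => by
      rw [mem_torsionBy_iff] at hy ⊢
      simpa using congrArg Subtype.val hy)
    fun _ _ h => Subtype.ext (Subtype.ext congr(($h : X)))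

lemma isArtinian_of_pow_smul_eq_zero (s : ℕ) (hs : ∀ y : X, x ^ s • y = 0)
    [IsArtinian A (torsionBy A X x)] : IsArtinian A X := by
  induction s generalizing X with
  | zero =>
    have : Subsingleton X := ⟨fun y z => by simpa using (hs y).trans (hs z).symm⟩
    infer_instance
  | succ s ih =>
    let f := DistribSMul.toLinearMap A X x
    have := isArtinian_torsionBy_submodule x (LinearMap.range f)
    have : IsArtinian A (LinearMap.range f) := by
      refine ih (X := LinearMap.range f) ?_
      rintro ⟨_, y, rfl⟩
      exact Subtype.ext (by simpa [f, ← mul_smul, ← pow_succ] using hs y)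
    have : IsArtinian A (X ⧸ torsionBy A X x) :=
      isArtinian_of_linearEquiv f.quotKerEquivRange.symm
    exact (isArtinian_iff_submodule_quotient (torsionBy A X x)).mpr
      ⟨inferInstance, inferInstance⟩

def Submodule.divisiblePart (N : Submodule A X) : Submodule A X := ⨅ n : ℕ, x ^ n • N

lemma pow_smul_antitone (N : Submodule A X) : Antitone fun n : ℕ => x ^ n • N :=
  antitone_nat_of_succ_le fun n => by
    rw [pow_succ', mul_smul]
    exact smul_le_self_of_tower x _

lemma divisiblePart_le_pow_smul (N : Submodule A X) (n : ℕ) : N.divisiblePart x ≤ x ^ n • N :=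
  iInf_le _ n

lemma divisiblePart_le (N : Submodule A X) : N.divisiblePart x ≤ N := by
  simpa using divisiblePart_le_pow_smul x N 0

lemma divisiblePart_mono : Monotone (Submodule.divisiblePart (X := X) x) :=
  fun _ _ h => iInf_mono fun _ => smul_mono_right _ h

variable {x}

lemma smul_divisiblePart [IsArtinian A (torsionBy A X x)] (N : Submodule A X) :
    x • N.divisiblePart x = N.divisiblePart x := by
  obtain ⟨s, hs⟩ := exists_forall_inf_le_of_antitone (torsionBy A X x) (pow_smul_antitone x N)
  refine le_antisymm (smul_le_self_of_tower x _) fun y hy => ?_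
  obtain ⟨w, hw, rfl⟩ := (mem_smul_pointwise_iff_exists _ _ _).mp
    (divisiblePart_le_pow_smul x N (s + 1) hy)
  rw [pow_succ', mul_smul]
  refine smul_mem_pointwise_smul _ _ _ (mem_iInf _ |>.mpr fun n => ?_)
  obtain ⟨w', hw', hww'⟩ := (mem_smul_pointwise_iff_exists _ _ _).mp
    (divisiblePart_le_pow_smul x N (n + s + 1) hy)
  have hb : x ^ (n + s) • w' ∈ x ^ (n + s) • N := smul_mem_pointwise_smul _ _ _ hw'
  have hab : x ^ s • w - x ^ (n + s) • w' ∈ x ^ n • N := by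
    refine hs n ⟨sub_mem (smul_mem_pointwise_smul _ _ _ hw)
      (pow_smul_antitone x N (Nat.le_add_left s n) hb), (mem_torsionBy_iff _ _).mpr ?_⟩
    rw [smul_sub, ← mul_smul, ← mul_smul, ← pow_succ', ← pow_succ', hww', sub_self]
  simpa using add_mem hab (pow_smul_antitone x N (Nat.le_add_right n s) hb)

lemma eq_of_le_of_inf_torsionBy_le (htor : ∀ y : X, ∃ n, x ^ n • y = 0) {D N : Submodule A X}
    (hD : x • D = D) (hDN : D ≤ N) (hN : N ⊓ torsionBy A X x ≤ D) : D = N := by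
  refine le_antisymm hDN fun y hy => ?_
  obtain ⟨n, hn⟩ := htor y
  induction n generalizing y with
  | zero => simp_all
  | succ n ih =>
    have hxy : x • y ∈ D := ih (x • y) (N.smul_mem x hy) (by rwa [← mul_smul, ← pow_succ])
    rw [← hD] at hxy
    obtain ⟨d, hd, hdy⟩ := (mem_smul_pointwise_iff_exists _ _ _).mp hxy
    have : y - d ∈ D := hN ⟨N.sub_mem hy (hDN hd), by simp [smul_sub, hdy]⟩
    simpa using D.add_mem this hd

lemma exists_pow_smul_eq_divisiblePart [IsArtinian A (torsionBy A X x)]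
    (htor : ∀ y : X, ∃ n, x ^ n • y = 0) (N : Submodule A X) :
    ∃ s, x ^ s • N = N.divisiblePart x := by
  obtain ⟨s, hs⟩ := exists_forall_inf_le_of_antitone (torsionBy A X x) (pow_smul_antitone x N)
  exact ⟨s, (eq_of_le_of_inf_torsionBy_le htor (smul_divisiblePart N)
    (divisiblePart_le_pow_smul x N s) (le_iInf hs)).symm⟩

lemma torsionBy_quotient_le_map {D : Submodule A X} (hD : x • D = D) :
    torsionBy A (X ⧸ D) x ≤ (torsionBy A X x).map D.mkQ := by
  intro z hz
  obtain ⟨y, rfl⟩ := D.mkQ_surjective z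
  rw [mem_torsionBy_iff, ← map_smul, mkQ_apply, Quotient.mk_eq_zero, ← hD] at hz
  obtain ⟨d, hd, hdy⟩ := (mem_smul_pointwise_iff_exists _ _ _).mp hz
  refine ⟨y - d, by simp [smul_sub, hdy], ?_⟩
  simpa using (Quotient.mk_eq_zero D).mpr hd

-- The divisible parts `⋂ₙ xⁿ Nᵢ` of a descending chain are determined by their traces on the
-- artinian module `torsionBy A X x`, so they stabilize at some `D`; from then on the chain lives
-- in the image of `N i₀` in `X ⧸ D`, which is killed by a power of `x`.
theorem isArtinian_of_isArtinian_torsionBy [IsArtinian A (torsionBy A X x)]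
    (htor : ∀ y : X, ∃ n, x ^ n • y = 0) : IsArtinian A X := by
  rw [← monotone_stabilizes_iff_artinian]
  intro N
  have hN : Antitone fun i => OrderDual.ofDual (N i) := fun _ _ h => N.monotone h
  obtain ⟨i₀, hi₀⟩ := exists_forall_inf_le_of_antitone (torsionBy A X x)
    ((divisiblePart_mono x).comp_antitone hN)
  obtain ⟨s, hs⟩ := exists_pow_smul_eq_divisiblePart htor (N i₀).ofDual
  set D := (N i₀).ofDual.divisiblePart x
  have hD : ∀ i, i₀ ≤ i → (N i).ofDual.divisiblePart x = D := fun i hi =>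
    eq_of_le_of_inf_torsionBy_le htor (smul_divisiblePart _) (divisiblePart_mono x (hN hi))
      (hi₀ i)
  let B := (N i₀).ofDual.map D.mkQ
  have : IsArtinian A ((torsionBy A X x).map D.mkQ) := by
    have := isArtinian_range (D.mkQ ∘ₗ (torsionBy A X x).subtype)
    rwa [LinearMap.range_comp, range_subtype] at this
  have : IsArtinian A (torsionBy A (X ⧸ D) x) :=
    isArtinian_of_le (torsionBy_quotient_le_map (smul_divisiblePart _))
  have := isArtinian_torsionBy_submodule x B
  have : IsArtinian A B := by
    refine isArtinian_of_pow_smul_eq_zero x s ?_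
    rintro ⟨_, y, hy, rfl⟩
    refine Subtype.ext ?_
    show x ^ s • D.mkQ y = 0
    rw [← map_smul, mkQ_apply, Quotient.mk_eq_zero, ← hs]
    exact smul_mem_pointwise_smul _ _ _ hy
  obtain ⟨k, hk⟩ := exists_forall_eq_of_antitone_of_le B
    (f := fun i => (N (i₀ + i)).ofDual.map D.mkQ)
    (fun _ _ h => map_mono (hN (Nat.add_le_add_left h i₀)))
    fun _ => map_mono (hN (Nat.le_add_right _ _))
  have hcomap : ∀ i, i₀ ≤ i → ((N i).ofDual.map D.mkQ).comap D.mkQ = (N i).ofDual := by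
    intro i hi
    rw [comap_map_mkQ, sup_eq_right, ← hD i hi]
    exact divisiblePart_le x _
  refine ⟨i₀ + k, fun m hm => ?_⟩
  have := congrArg (comap D.mkQ) (hk (m - i₀) (by omega))
  rw [Nat.add_sub_cancel' (by omega), hcomap _ (by omega), hcomap _ (by omega)] at this
  exact this.symm

theorem isArtinian_of_isArtinian_torsionBySet (s : Finset A)
    [IsArtinian A (torsionBySet A X s)] (htor : ∀ a ∈ s, ∀ y : X, ∃ n, a ^ n • y = 0) :
    IsArtinian A X := by
  classical
  induction s using Finset.induction_on generalizing X with
  | empty =>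
    have : torsionBySet A X ((∅ : Finset A) : Set A) = ⊤ :=
      eq_top_iff.mpr fun _ _ => (mem_torsionBySet_iff _ _).mpr fun ⟨_, h⟩ =>
        absurd h (Finset.notMem_empty _)
    exact isArtinian_of_linearEquiv ((LinearEquiv.ofEq _ _ this).trans topEquiv)
  | insert a s ha ih =>
    let K := torsionBy A X a
    have : IsArtinian A (torsionBySet A K s) := by
      refine isArtinian_of_injective (P := torsionBySet A X ↑(insert a s))
        (K.subtype.restrict fun y hy => (mem_torsionBySet_iff _ _).mpr ?_)
        fun _ _ h => Subtype.ext (Subtype.ext congr(($h : X)))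
      rintro ⟨b, hb⟩
      rcases Finset.mem_insert.mp hb with rfl | hb
      · exact y.2
      · simpa using congrArg Subtype.val ((mem_torsionBySet_iff _ _).mp hy ⟨b, hb⟩)
    have : IsArtinian A (torsionBy A X a) := ih fun b hb y => by
      obtain ⟨n, hn⟩ := htor b (Finset.mem_insert_of_mem hb) y
      exact ⟨n, Subtype.ext hn⟩
    exact isArtinian_of_isArtinian_torsionBy (htor a (Finset.mem_insert_self a s))

end Melkersson

lemma Finset.exists_mem_forall_mem_of_antitone {α : Type*} (H : Finset α) {S : ℕ → Set α}
    (hS : Antitone S) (hH : ∀ n, ∃ a ∈ H, a ∈ S n) : ∃ a ∈ H, ∀ n, a ∈ S n := by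
  by_contra! h
  choose! f hf using h
  obtain ⟨a, ha, haS⟩ := hH (H.sup f)
  exact hf a ha (hS (H.le_sup ha) haS)

section FiniteTestSet

variable {A : Type u} [CommRing A] {Q : Type v} [AddCommGroup Q] [Module A Q] {H : Finset Q}

lemma isArtinian_torsionBySet_of_isSemisimpleRing (h0 : (0 : Q) ∉ H)
    (hH : ∀ P : Submodule A Q, P ≠ ⊥ → ∃ h ∈ H, h ∈ P) (J : Ideal A)
    [IsSemisimpleRing (A ⧸ J)] :
    IsArtinian A (torsionBySet A Q J) := by
  set T := torsionBySet A Q J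
  have hT := torsionBySet_isTorsionBySet (R := A) (M := Q) (J : Set A)
  let _ := hT.module
  have : IsSemisimpleModule A T := hT.isSemisimpleModule_iff.mp inferInstance
  have hspan : span A {t : T | (t : Q) ∈ H} = ⊤ := by
    obtain ⟨C, hC⟩ := exists_isCompl (span A {t : T | (t : Q) ∈ H})
    suffices C = ⊥ by simpa [this] using hC.sup_eq_top
    by_contra hC0
    obtain ⟨_, hh, ⟨t, htC, rfl⟩⟩ := hH (C.map T.subtype)
      (by rwa [Ne, ← map_bot T.subtype, (map_injective_of_injective T.injective_subtype).eq_iff])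
    have : t ∈ span A {t : T | (t : Q) ∈ H} ⊓ C := ⟨subset_span hh, htC⟩
    rw [hC.inf_eq_bot, mem_bot] at this
    exact h0 (by simpa [this] using hh)
  have : Module.Finite A T :=
    ⟨hspan ▸ ⟨(H.finite_toSet.preimage Subtype.val_injective.injOn).toFinset, by
      rw [Set.Finite.coe_toFinset]; rfl⟩⟩
  infer_instance

variable [IsNoetherianRing A]

lemma exists_mul_smul_eq_self_of_forall_mem_span {x : A} {y h : Q}
    (hh : ∀ n : ℕ, h ∈ span A {x ^ n • y}) : ∃ b : A, (b * x) • h = h := by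
  let P := span A {y}
  have hhP : h ∈ P := by simpa using hh 0
  have hpow : ∀ n : ℕ,
      (Ideal.span {x} ^ n • ⊤ : Submodule A P).map P.subtype = span A {x ^ n • y} := by
    intro n
    rw [map_smul'', Submodule.map_top, range_subtype, Ideal.span_singleton_pow, span_smul_span,
      Set.singleton_smul_singleton]
  have hmem : (⟨h, hhP⟩ : P) ∈ ⨅ n : ℕ, (Ideal.span {x} ^ n • ⊤ : Submodule A P) := by
    refine mem_iInf _ |>.mpr fun n => ?_
    obtain ⟨z, hz, hzh⟩ := hpow n ▸ hh n
    rwa [show z = ⟨h, hhP⟩ from Subtype.ext hzh] at hz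
  obtain ⟨⟨r, hr⟩, hrh⟩ := (Ideal.mem_iInf_smul_pow_eq_bot_iff _ _).mp hmem
  obtain ⟨b, rfl⟩ := Ideal.mem_span_singleton'.mp hr
  exact ⟨b, congr(($hrh : Q))⟩

lemma exists_mem_span_mul_smul_eq_self
    (hH : ∀ P : Submodule A Q, P ≠ ⊥ → ∃ h ∈ H, h ∈ P)
    {x : A} {y : Q} (hxy : ∀ n : ℕ, x ^ n • y ≠ 0) :
    ∃ h ∈ H, h ∈ span A {y} ∧ ∃ b : A, (b * x) • h = h := by
  have hanti : Antitone fun n : ℕ => (span A {x ^ n • y} : Set Q) := by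
    refine antitone_nat_of_succ_le fun n => SetLike.coe_subset_coe.mpr ?_
    rw [span_singleton_le_iff_mem, pow_succ', mul_smul]
    exact smul_mem _ _ (mem_span_singleton_self _)
  obtain ⟨h, hH', hh⟩ := H.exists_mem_forall_mem_of_antitone hanti fun n =>
    hH _ (by simpa using hxy n)
  exact ⟨h, hH', by simpa using hh 0, exists_mul_smul_eq_self_of_forall_mem_span hh⟩

lemma exists_pow_smul_eq_zero_of_mem_annihilator (h0 : (0 : Q) ∉ H)
    (hH : ∀ P : Submodule A Q, P ≠ ⊥ → ∃ h ∈ H, h ∈ P) {a : A}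
    (ha : a ∈ Module.annihilator A (span A (H : Set Q))) (y : Q) :
    ∃ n : ℕ, a ^ n • y = 0 := by
  by_contra! hy
  obtain ⟨h, hH', -, b, hb⟩ := exists_mem_span_mul_smul_eq_self hH hy
  have : a • h = 0 := by
    simpa using Module.mem_annihilator.mp ha ⟨h, subset_span hH'⟩
  exact h0 (by rwa [← hb, mul_smul, this, smul_zero] at hH')

lemma IsAssociatedPrime.isMaximal_of_forall_ne_bot (h0 : (0 : Q) ∉ H)
    (hH : ∀ P : Submodule A Q, P ≠ ⊥ → ∃ h ∈ H, h ∈ P) {p : Ideal A}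
    (hp : IsAssociatedPrime p Q) :
    p.IsMaximal := by
  obtain ⟨hprime, y, rfl⟩ := isAssociatedPrime_iff.mp hp
  refine Ideal.isMaximal_iff.mpr ⟨hprime.ne_top ∘ (Ideal.eq_top_iff_one _).mpr,
    fun J x hpJ hx hxJ => ?_⟩
  have hxy : ∀ n : ℕ, x ^ n • y ≠ 0 := fun n h =>
    hx (hprime.mem_of_pow_mem n (mem_colon_singleton.mpr (by simpa using h)))
  obtain ⟨h, hH', hy, b, hb⟩ := exists_mem_span_mul_smul_eq_self hH hxy
  obtain ⟨c, rfl⟩ := mem_span_singleton.mp hy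
  have hc : c ∉ colon ⊥ {y} := fun hc => h0 (by simpa using mem_colon_singleton.mp hc ▸ hH')
  have h1 : 1 - b * x ∈ colon ⊥ {y} := by
    refine (hprime.mem_or_mem (mem_colon_singleton.mpr ?_)).resolve_right hc
    simp [mul_smul, sub_smul, hb]
  simpa using J.add_mem (hpJ h1) (J.mul_mem_left b hxJ)

lemma isSemisimpleRing_quotient_radical_annihilator (h0 : (0 : Q) ∉ H)
    (hH : ∀ P : Submodule A Q, P ≠ ⊥ → ∃ h ∈ H, h ∈ P) :
    IsSemisimpleRing (A ⧸ (Module.annihilator A (span A (H : Set Q))).radical) := by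
  set I := Module.annihilator A (span A (H : Set Q))
  have : Ring.KrullDimLE 0 (A ⧸ I.radical) := by
    refine Ideal.krullDimLE_zero_quotient_iff_forall_minimalPrimes_isMaximal.mpr fun p hp => ?_
    rw [Ideal.radical_minimalPrimes] at hp
    have hass := Module.associatedPrimes.minimalPrimes_annihilator_subset_associatedPrimes A _ hp
    exact (hass.map_of_injective _ (injective_subtype _)).isMaximal_of_forall_ne_bot h0 hH
  have := IsNoetherianRing.isArtinianRing_of_krullDimLE_zero (R := A ⧸ I.radical)
  have := (Ideal.isRadical_iff_quotient_reduced I.radical).mp (Ideal.radical_isRadical I)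
  exact IsArtinianRing.isSemisimpleRing_of_isReduced _

theorem isArtinian_of_forall_ne_bot_exists_mem (h0 : (0 : Q) ∉ H)
    (hH : ∀ P : Submodule A Q, P ≠ ⊥ → ∃ h ∈ H, h ∈ P) : IsArtinian A Q := by
  set I := Module.annihilator A (span A (H : Set Q))
  have := isSemisimpleRing_quotient_radical_annihilator h0 hH
  have := isArtinian_torsionBySet_of_isSemisimpleRing h0 hH I.radical
  obtain ⟨s, hs⟩ := IsNoetherian.noetherian I.radical
  have : IsArtinian A (torsionBySet A Q s) := by
    rwa [torsionBySet_eq_torsionBySet_span, Ideal.span, hs]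
  refine isArtinian_of_isArtinian_torsionBySet s fun a ha y => ?_
  obtain ⟨k, hk⟩ : a ∈ I.radical := hs ▸ subset_span ha
  obtain ⟨n, hn⟩ := exists_pow_smul_eq_zero_of_mem_annihilator h0 hH hk y
  exact ⟨k * n, by rwa [pow_mul]⟩

end FiniteTestSet

section Socle

variable {A : Type u} [CommRing A]

lemma finite_of_isSimpleModule
    (hfin : ∀ (S : Type u) [AddCommGroup S] [Module A S], IsSimpleModule A S → Finite S)
    (X : Type v) [AddCommGroup X] [Module A X] [IsSimpleModule A X] : Finite X := by
  obtain ⟨I, -, ⟨e⟩⟩ := isSimpleModule_iff_quot_maximal.mp ‹IsSimpleModule A X›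
  have := hfin (A ⧸ I) (IsSimpleModule.congr e.symm)
  exact Finite.of_equiv _ e.symm.toEquiv

lemma exists_finset_forall_ne_bot_exists_mem {Q : Type v} [AddCommGroup Q] [Module A Q]
    [IsArtinian A Q]
    (hfin : ∀ (S : Type u) [AddCommGroup S] [Module A S], IsSimpleModule A S → Finite S) :
    ∃ H : Finset Q, (0 : Q) ∉ H ∧
      ∀ P : Submodule A Q, P ≠ ⊥ → ∃ h ∈ H, h ∈ P := by
  classical
  let S := ⨆ P ∈ {P : Submodule A Q | IsSimpleModule A P}, P
  have : IsSemisimpleModule A S :=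
    isSemisimpleModule_biSup_of_isSemisimpleModule_submodule fun P (hP : IsSimpleModule A P) =>
      inferInstance
  have : Module.Finite A S := ((IsSemisimpleModule.finite_tfae (R := A) (M := S)).out 2 0).mp
    (inferInstance : IsArtinian A S)
  obtain ⟨n, T, e, hT⟩ := IsSemisimpleModule.exists_linearEquiv_fin_dfinsupp A S
  have := fun i => finite_of_isSimpleModule hfin (T i)
  have : Finite S := Finite.of_equiv _ (e.toEquiv.trans DFinsupp.equivFunOnFintype).symm
  refine ⟨(Set.toFinite (S : Set Q)).toFinset.erase 0, by simp, fun P hP => ?_⟩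
  obtain ⟨U, hU, hUP⟩ := (eq_bot_or_exists_atom_le P).resolve_left hP
  obtain ⟨u, hu, hu0⟩ := exists_mem_ne_zero_of_ne_bot hU.1
  have hUS : U ≤ S := le_biSup id (isSimpleModule_iff_isAtom.mpr hU)
  exact ⟨u, by simpa [hu0] using hUS hu, hUP hu⟩

end Socle

section Isolated

variable {A : Type u} [CommRing A] {M : Type v} [AddCommGroup M] [Module A M]
  {N : Submodule A M} {E : Finset M}

def Submodule.IsDeterminedOn (N : Submodule A M) (E : Finset M) : Prop :=
  ∀ P : Submodule A M, (∀ e ∈ E, e ∈ P ↔ e ∈ N) → P = N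

open Filter Topology in
theorem isIsolatedSubmodule_iff_exists_isDeterminedOn :
    IsIsolatedSubmodule A M N ↔ ∃ E : Finset M, N.IsDeterminedOn E := by
  classical
  let χ : Submodule A M → M → Bool := fun P m => decide (m ∈ P)
  have hbasis : (@nhds _ (submoduleTopology A M) N).HasBasis
      (fun E : Set M × (M → Unit) => E.1.Finite ∧ ∀ e ∈ E.1, True)
      (fun E => χ ⁻¹' E.1.pi fun e => {χ N e}) := by
    rw [submoduleTopology, nhds_induced, nhds_pi]
    simp only [nhds_discrete]
    exact (hasBasis_pi fun e => hasBasis_pure (χ N e)).comap χ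
  rw [IsIsolatedSubmodule, @isOpen_iff_mem_nhds]
  simp only [Set.mem_singleton_iff, forall_eq]
  rw [hbasis.mem_iff]
  simp only [Set.subset_singleton_iff, Set.mem_preimage, Set.mem_pi, Set.mem_singleton_iff, χ,
    decide_eq_decide]
  constructor
  · rintro ⟨⟨E, _⟩, ⟨hE, -⟩, h⟩
    exact ⟨hE.toFinset, fun P hP => h P fun e he => hP e (hE.mem_toFinset.mpr he)⟩
  · rintro ⟨E, h⟩
    exact ⟨⟨E, fun _ => ()⟩, ⟨E.finite_toSet, fun _ _ => trivial⟩, h⟩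

lemma Submodule.IsDeterminedOn.fg (hE : N.IsDeterminedOn E) : N.FG := by
  classical
  refine ⟨E.filter (· ∈ N), hE _ fun e he => ⟨fun h => span_le.mpr (fun _ h' => ?_) h,
    fun h => subset_span ?_⟩⟩
  · exact (Finset.mem_filter.mp h').2
  · exact Finset.mem_filter.mpr ⟨he, h⟩

lemma Submodule.IsDeterminedOn.exists_finset_forall_ne_bot_exists_mem
    (hE : N.IsDeterminedOn E) :
    ∃ H : Finset (M ⧸ N), (0 : M ⧸ N) ∉ H ∧
      ∀ P : Submodule A (M ⧸ N), P ≠ ⊥ → ∃ h ∈ H, h ∈ P := by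
  classical
  refine ⟨(E.filter (· ∉ N)).image N.mkQ, by simp, fun P hP => ?_⟩
  have hne : P.comap N.mkQ ≠ N := fun h => hP <| by
    rw [← map_comap_eq_of_surjective N.mkQ_surjective P, h, mkQ_map_self]
  obtain ⟨e, he, hPN⟩ : ∃ e ∈ E, ¬(e ∈ P.comap N.mkQ ↔ e ∈ N) := by
    by_contra! h
    exact hne (hE _ h)
  have heN : e ∉ N := fun heN => hPN ⟨fun _ => heN, fun _ => le_comap_mkQ N P heN⟩
  have heP : e ∈ P.comap N.mkQ := by tauto
  exact ⟨N.mkQ e, Finset.mem_image_of_mem _ (Finset.mem_filter.mpr ⟨he, heN⟩), heP⟩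

theorem fg_and_isArtinian_quotient_of_isIsolatedSubmodule [IsNoetherianRing A]
    (hN : IsIsolatedSubmodule A M N) : N.FG ∧ IsArtinian A (M ⧸ N) := by
  obtain ⟨E, hE⟩ := isIsolatedSubmodule_iff_exists_isDeterminedOn.mp hN
  obtain ⟨H, h0, hH⟩ := hE.exists_finset_forall_ne_bot_exists_mem
  exact ⟨hE.fg, isArtinian_of_forall_ne_bot_exists_mem h0 hH⟩

theorem isIsolatedSubmodule_of_fg_of_isArtinian
    (hfin : ∀ (S : Type u) [AddCommGroup S] [Module A S], IsSimpleModule A S → Finite S)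
    (hN : N.FG) [IsArtinian A (M ⧸ N)] : IsIsolatedSubmodule A M N := by
  classical
  obtain ⟨F, hF⟩ := hN
  obtain ⟨G, hG0, hG⟩ := exists_finset_forall_ne_bot_exists_mem (Q := M ⧸ N) hfin
  let σ := Function.surjInv N.mkQ_surjective
  refine isIsolatedSubmodule_iff_exists_isDeterminedOn.mpr ⟨F ∪ G.image σ, fun P hP => ?_⟩
  have hNP : N ≤ P := hF ▸ span_le.mpr fun f hf =>
    (hP f (Finset.mem_union_left _ hf)).mpr (hF ▸ subset_span hf)
  refine le_antisymm (not_not.mp fun hPN => ?_) hNP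
  obtain ⟨_, hg, p, hp, rfl⟩ :=
    hG (P.map N.mkQ) (by rwa [Ne, ← LinearMap.le_ker_iff_map, ker_mkQ])
  have hσp : N.mkQ (σ (N.mkQ p)) = N.mkQ p := Function.surjInv_eq N.mkQ_surjective _
  have hσP : σ (N.mkQ p) ∈ P := by
    have : σ (N.mkQ p) - p ∈ N := (Submodule.Quotient.eq N).mp hσp
    simpa using P.add_mem (hNP this) hp
  have hσN := (hP _ (Finset.mem_union_right _ (Finset.mem_image_of_mem σ hg))).mp hσP
  exact hG0 (by rwa [← hσp, mkQ_apply, (Quotient.mk_eq_zero N).mpr hσN] at hg)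

end Isolated

/-- Let `A` be a noetherian commutative ring and `M` an `A`-module, and endow `Sub(M)` with
the topology induced from `2^M`.  (1) If `N` is an isolated point of `Sub(M)` then `N` is
finitely generated and `M/N` is artinian; in particular if `Sub(M)` has an isolated point
then `M` is minimax.  (2) If every simple `A`-module is finite, then conversely `N` is
isolated iff `N` is finitely generated and `M/N` is artinian, and `Sub(M)` has an isolated
point iff `M` is minimax. -/
theorem isolated_submodule_iff
    (A : Type u) [CommRing A] [IsNoetherianRing A]
    (M : Type v) [AddCommGroup M] [Module A M] :
    (∀ N : Submodule A M, IsIsolatedSubmodule A M N →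
        N.FG ∧ IsArtinian A (M ⧸ N)) ∧
    ((∃ N : Submodule A M, IsIsolatedSubmodule A M N) →
        ∃ N : Submodule A M, N.FG ∧ IsArtinian A (M ⧸ N)) ∧
    ((∀ (S : Type u) [AddCommGroup S] [Module A S], IsSimpleModule A S → Finite S) →
      (∀ N : Submodule A M, IsIsolatedSubmodule A M N ↔
          N.FG ∧ IsArtinian A (M ⧸ N)) ∧
      ((∃ N : Submodule A M, IsIsolatedSubmodule A M N) ↔
          ∃ N : Submodule A M, N.FG ∧ IsArtinian A (M ⧸ N))) := by
  have hiff (hfin : ∀ (S : Type u) [AddCommGroup S] [Module A S], IsSimpleModule A S → Finite S)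
      (N : Submodule A M) : IsIsolatedSubmodule A M N ↔ N.FG ∧ IsArtinian A (M ⧸ N) :=
    ⟨fg_and_isArtinian_quotient_of_isIsolatedSubmodule,
      fun ⟨hN, _⟩ => isIsolatedSubmodule_of_fg_of_isArtinian hfin hN⟩
  refine ⟨fun N => fg_and_isArtinian_quotient_of_isIsolatedSubmodule,
    fun ⟨N, hN⟩ => ⟨N, fg_and_isArtinian_quotient_of_isIsolatedSubmodule hN⟩,
    fun hfin => ⟨hiff hfin, exists_congr (hiff hfin)⟩⟩
end

section
/- Let A be a noetherian commutative ring, M a meager A-module, and S a multiplicative subset of A. Then the localized module S⁻¹M is a meager S⁻¹A-module. -/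
/-- An `R`-module `M` is meager if for every maximal ideal `𝔪` of `R`, `(R/𝔪)²` is not
isomorphic to a subquotient of `M`. -/
def IsMeagerModule (R : Type u) [CommRing R]
    (M : Type v) [AddCommGroup M] [Module R M] : Prop :=
  ∀ 𝔪 : Ideal R, 𝔪.IsMaximal → ¬ IsSubquotientOf R ((R ⧸ 𝔪) × (R ⧸ 𝔪)) M

/-!
Let `L = S⁻¹A` and let `(L/𝔪)²` be a subquotient `P/N` of `S⁻¹M`. Up to factors from `S`, which
are units of `L`, its two basis vectors are images of some `x₁, x₂ ∈ M`. If `c x₁ + d x₂` maps to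
`0` in `S⁻¹M/N` then `c, d ∈ 𝔭 = 𝔪 ∩ A`. Hence `(a, b) ↦ a x₁ + b x₂`, read modulo the kernel of
`M → S⁻¹M/N`, has kernel inside `m²` for any maximal ideal `m ⊇ 𝔭`, which makes `(A/m)²` a
subquotient of `M`.
-/

open Submodule LinearMap

theorem Submodule.comap_sup_map_le {R F M : Type*} [CommRing R] [AddCommGroup F] [Module R F]
    [AddCommGroup M] [Module R M] (φ : F →ₗ[R] M) (N : Submodule R M) (K : Submodule R F) :
    (N ⊔ K.map φ).comap φ ≤ N.comap φ ⊔ K := by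
  intro x hx
  obtain ⟨n, hn, _, ⟨k, hk, rfl⟩, hsum⟩ := mem_sup.mp (mem_comap.mp hx)
  have hxk : x - k ∈ N.comap φ := by
    rw [mem_comap, map_sub, ← hsum, add_sub_cancel_right]
    exact hn
  simpa using add_mem (mem_sup_left hxk) (mem_sup_right hk)

theorem IsSubquotientOf.of_surjective_of_comap_le {R F X M : Type*} [CommRing R]
    [AddCommGroup F] [Module R F] [AddCommGroup X] [Module R X] [AddCommGroup M] [Module R M]
    (π : F →ₗ[R] X) (hπ : Function.Surjective π) (φ : F →ₗ[R] M) (N : Submodule R M)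
    (h : N.comap φ ≤ ker π) : IsSubquotientOf R X M := by
  set K := ker π
  let g := K.mapQ (N ⊔ K.map φ) φ (map_le_iff_le_comap.mp le_sup_right)
  have hg : Function.Injective g := by
    rw [← ker_eq_bot, ker_mapQ, ← le_bot_iff, map_le_iff_le_comap, comap_bot, ker_mkQ]
    exact (comap_sup_map_le φ N K).trans (sup_le h le_rfl)
  exact ⟨N ⊔ K.map φ, range g,
    ⟨(π.quotKerEquivOfSurjective hπ).symm ≪≫ₗ LinearEquiv.ofInjective g hg⟩⟩

theorem LocalizedModule.exists_mkQ_mk_eq_smul {A M : Type*} [CommRing A] [AddCommGroup M]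
    [Module A M] {S : Submonoid A} (N : Submodule (Localization S) (LocalizedModule S M))
    (z : LocalizedModule S M ⧸ N) : ∃ s ∈ S, ∃ x : M, N.mkQ (mk x 1) = s • z := by
  obtain ⟨y, rfl⟩ := N.mkQ_surjective z
  obtain ⟨⟨x, s⟩, hx⟩ := IsLocalizedModule.surj S (mkLinearMap S M) y
  exact ⟨s, s.2, x, by rw [← map_smul_of_tower]; exact congrArg N.mkQ hx.symm⟩

theorem ker_coprod_toSpanSingleton_le_prod_comap {R L Q : Type*} [CommRing R] [CommRing L]
    [Algebra R L] [AddCommGroup Q] [Module L Q] [Module R Q] [IsScalarTower R L Q]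
    (𝔪 : Ideal L) (f : (L ⧸ 𝔪) × (L ⧸ 𝔪) →ₗ[L] Q) (hf : Function.Injective f) {s₁ s₂ : R}
    (hs₁ : IsUnit (algebraMap R L s₁)) (hs₂ : IsUnit (algebraMap R L s₂)) :
    ker ((toSpanSingleton R Q (s₁ • f (1, 0))).coprod (toSpanSingleton R Q (s₂ • f (0, 1)))) ≤
      Submodule.prod (𝔪.comap (algebraMap R L)) (𝔪.comap (algebraMap R L)) := by
  rintro ⟨c, d⟩ h
  have hpair (a b : L) :
      f (Ideal.Quotient.mk 𝔪 a, Ideal.Quotient.mk 𝔪 b) = a • f (1, 0) + b • f (0, 1) := by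
    rw [← map_smul, ← map_smul, ← map_add]
    congr 1
    ext <;> simp [Algebra.smul_def]
  have hzero : f (Ideal.Quotient.mk 𝔪 (algebraMap R L (c * s₁)),
      Ideal.Quotient.mk 𝔪 (algebraMap R L (d * s₂))) = f 0 := by
    rw [hpair, map_zero, algebraMap_smul, algebraMap_smul, mul_smul, mul_smul]
    simpa using h
  obtain ⟨hc, hd⟩ := Prod.mk_eq_zero.mp (hf hzero)
  rw [Ideal.Quotient.eq_zero_iff_mem, map_mul, Ideal.mul_unit_mem_iff_mem _ hs₁] at hc
  rw [Ideal.Quotient.eq_zero_iff_mem, map_mul, Ideal.mul_unit_mem_iff_mem _ hs₂] at hd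
  exact ⟨hc, hd⟩

theorem isMeagerModule_localizedModule_general
    (A : Type u) [CommRing A]
    (M : Type v) [AddCommGroup M] [Module A M]
    (S : Submonoid A) (hM : IsMeagerModule A M) :
    IsMeagerModule (Localization S) (LocalizedModule S M) := by
  rintro 𝔪 h𝔪 ⟨N, W, ⟨e⟩⟩
  obtain ⟨m, hm, hle⟩ := Ideal.exists_le_maximal (𝔪.comap (algebraMap A (Localization S)))
    (Ideal.comap_ne_top _ h𝔪.ne_top)
  refine hM m hm ?_
  let f := W.subtype ∘ₗ e.toLinearMap
  obtain ⟨s₁, hs₁, x₁, hx₁⟩ := LocalizedModule.exists_mkQ_mk_eq_smul N (f (1, 0))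
  obtain ⟨s₂, hs₂, x₂, hx₂⟩ := LocalizedModule.exists_mkQ_mk_eq_smul N (f (0, 1))
  let ψ : M →ₗ[A] LocalizedModule S M ⧸ N :=
    N.mkQ.restrictScalars A ∘ₗ LocalizedModule.mkLinearMap S M
  have hψ (x : M) : ψ x = N.mkQ (LocalizedModule.mk x 1) := rfl
  refine IsSubquotientOf.of_surjective_of_comap_le (m.mkQ.prodMap m.mkQ)
    (Prod.map_surjective.mpr ⟨m.mkQ_surjective, m.mkQ_surjective⟩)
    ((toSpanSingleton A M x₁).coprod (toSpanSingleton A M x₂)) (ker ψ) ?_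
  rw [ker_prodMap, ker_mkQ, ← ker_comp, comp_coprod, comp_toSpanSingleton,
    comp_toSpanSingleton, hψ, hψ, hx₁, hx₂]
  exact (ker_coprod_toSpanSingleton_le_prod_comap 𝔪 f (W.injective_subtype.comp e.injective)
    (IsLocalization.map_units _ ⟨s₁, hs₁⟩) (IsLocalization.map_units _ ⟨s₂, hs₂⟩)).trans
    (Submodule.prod_mono hle hle)

/-- Let `A` be a noetherian commutative ring, `M` a meager `A`-module and `S` a
multiplicative subset of `A`.  Then `S⁻¹M` is a meager `S⁻¹A`-module. -/
theorem isMeagerModule_localizedModule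
    (A : Type u) [CommRing A] [IsNoetherianRing A]
    (M : Type v) [AddCommGroup M] [Module A M]
    (S : Submonoid A) (hM : IsMeagerModule A M) :
    IsMeagerModule (Localization S) (LocalizedModule S M) :=
  isMeagerModule_localizedModule_general A M S hM
end
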